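/- arXiv:0707.1404 — 10 statements merged into one kernel-verified Lean document; each statement's English description precedes it below -/
import Mathlib

section
/- Let r be a left exact preradical on the category of right B-modules arising as the right adjoint of the inclusion of a closed subcategory C. If r is an exact functor, then r(M) = M·a for every right B-module M, where a = r(B) is a two-sided ideal of B. -/
/-!
Statement 0. Let `r` be the left exact preradical on the category of (right) `B`-modules
arising as the right adjoint of the inclusion of a closed subcategory `C` (so `r M` is the
largest submodule of `M` belonging to `C`).  If `r` is an exact functor, then
`r M = M·a` for every `B`-module `M`, where `a = r B` is a two-sided ideal of `B`.
(Formalized for left modules; the statement for right `B`-modules is the mirror image,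
obtained by replacing `B` with its opposite ring.)
-/

universe u

open DirectSum

/-- A closed subcategory of the category of `B`-modules: a class of modules
closed under isomorphisms, submodules, quotients and arbitrary direct sums. -/
structure ClosedSubcategory (B : Type u) [Ring B] : Type (u + 1) where
  Mem : ∀ (M : Type u) [AddCommGroup M] [Module B M], Prop
  mem_congr : ∀ {M N : Type u} [AddCommGroup M] [Module B M] [AddCommGroup N] [Module B N],
    (M ≃ₗ[B] N) → Mem M → Mem N
  mem_submodule : ∀ {M : Type u} [AddCommGroup M] [Module B M] (N : Submodule B M),
    Mem M → Mem N
  mem_quotient : ∀ {M : Type u} [AddCommGroup M] [Module B M] (N : Submodule B M),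
    Mem M → Mem (M ⧸ N)
  mem_directSum : ∀ {ι : Type u} (M : ι → Type u) [∀ i, AddCommGroup (M i)]
    [∀ i, Module B (M i)], (∀ i, Mem (M i)) → Mem (⨁ i, M i)

/-- The submodule `a•M` of `M` (the mirror of `M·a` for right modules). -/
def idealSMul {B : Type u} [Ring B] (a : Ideal B) (M : Type u) [AddCommGroup M]
    [Module B M] : Submodule B M :=
  Submodule.span B {z : M | ∃ x ∈ a, ∃ m : M, z = x • m}

/-!
Every element `x • m` with `x ∈ r B` lies in the image of `r B` under `b ↦ b • m`, a quotient
of a module of `C`, hence in `r M`; so `a • M ≤ r M`, which for `M = B` makes `a` a right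
ideal. Conversely, present `M` as a quotient of the free module `M →₀ B`. Exactness of `r`
says that `r M` is the image of `r (M →₀ B)`, and, applied to the coordinate projections, that
every coordinate of an element of `r (M →₀ B)` lies in `a`; so `r M ≤ a • M`.
-/

open Finsupp

section

variable {B : Type u} [Ring B]

theorem ClosedSubcategory.mem_range (C : ClosedSubcategory B) {P N : Type u}
    [AddCommGroup P] [Module B P] [AddCommGroup N] [Module B N] (g : P →ₗ[B] N)
    (hP : C.Mem P) : C.Mem (LinearMap.range g) :=
  C.mem_congr g.quotKerEquivRange (C.mem_quotient _ hP)

theorem ClosedSubcategory.idealSMul_le (C : ClosedSubcategory B) {a : Ideal B} (ha : C.Mem a)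
    {M : Type u} [AddCommGroup M] [Module B M] {T : Submodule B M}
    (hT : ∀ N : Submodule B M, C.Mem N → N ≤ T) : idealSMul a M ≤ T := by
  rw [idealSMul, Submodule.span_le]
  rintro _ ⟨x, hx, m, rfl⟩
  exact hT _ (C.mem_range ((LinearMap.toSpanSingleton B M m).comp a.subtype) ha) ⟨⟨x, hx⟩, rfl⟩

theorem linearCombination_mem_idealSMul (a : Ideal B) {M : Type u} [AddCommGroup M]
    [Module B M] {z : M →₀ B} (hz : ∀ m, z m ∈ a) :
    linearCombination B id z ∈ idealSMul a M := by
  rw [linearCombination_apply]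
  exact Submodule.sum_mem _ fun m _ => Submodule.subset_span ⟨z m, hz m, m, rfl⟩

theorem le_idealSMul_of_map_eq (r : ∀ (M : Type u) [AddCommGroup M] [Module B M], Submodule B M)
    (hexact : ∀ {M N : Type u} [AddCommGroup M] [Module B M] [AddCommGroup N] [Module B N]
      (f : M →ₗ[B] N), Function.Surjective f → (r M).map f = r N)
    (M : Type u) [AddCommGroup M] [Module B M] : r M ≤ idealSMul (r B) M := by
  rw [← hexact _ (linearCombination_id_surjective B M), Submodule.map_le_iff_le_comap]
  intro z hz
  have hcoord : ∀ m, z m ∈ r B := fun m =>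
    hexact (lapply (R := B) (M := B) m) (apply_surjective m) ▸ Submodule.mem_map_of_mem hz
  exact linearCombination_mem_idealSMul (r B) hcoord

end

theorem stmt0 {B : Type u} [Ring B] (C : ClosedSubcategory B)
    (r : ∀ (M : Type u) [AddCommGroup M] [Module B M], Submodule B M)
    (hmem : ∀ (M : Type u) [AddCommGroup M] [Module B M], C.Mem (r M))
    (hmax : ∀ (M : Type u) [AddCommGroup M] [Module B M] (N : Submodule B M),
      C.Mem N → N ≤ r M)
    -- `r` is an exact functor (for a left exact preradical this is equivalent to
    -- preservation of epimorphisms):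
    (hexact : ∀ {M N : Type u} [AddCommGroup M] [Module B M] [AddCommGroup N] [Module B N]
      (f : M →ₗ[B] N), Function.Surjective f → (r M).map f = r N) :
    -- `a = r B` is a two-sided ideal of `B` and `r M = a • M` for every module `M`.
    (∀ x ∈ r B, ∀ b : B, x * b ∈ r B) ∧
      ∀ (M : Type u) [AddCommGroup M] [Module B M], r M = idealSMul (r B) M := by
  have hle : ∀ (M : Type u) [AddCommGroup M] [Module B M], idealSMul (r B) M ≤ r M :=
    fun M _ _ => C.idealSMul_le (hmem B) (hmax M)
  refine ⟨fun x hx b => hle B (Submodule.subset_span ⟨x, hx, b, rfl⟩), fun M _ _ => ?_⟩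
  exact le_antisymm (le_idealSMul_of_map_eq r hexact M) (hle M)
end

section
/- Let r be the preradical associated to a closed subcategory of Mod-B and a = r(B). If r is exact, then a is an idempotent ideal (a² = a) and the quotient ring B/a is flat as a left B-module. -/
/-!
Statement 1.  Let `r` be the preradical associated to a closed subcategory of the
category of (right) `B`-modules and `a = r B`.  If `r` is exact, then `a` is an
idempotent ideal (`a² = a`) and the quotient `B/a` is flat as a module on the other
side.  (Formalized for left modules: the mirror of "`B/a` is flat as a *left*
`B`-module" is "`B/a` is flat as a *right* `B`-module", i.e. as a left module over
`Bᵐᵒᵖ`; flatness over a possibly noncommutative ring is expressed by the standard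
equational criterion.)
-/

universe u

open DirectSum

/-- Flatness of a left `R`-module `M` over a (possibly noncommutative) ring `R`,
via the equational criterion: every relation `∑ xᵢ • nᵢ = 0` factors trivially. -/
def EquationallyFlat (R : Type*) [Ring R] (M : Type*) [AddCommGroup M] [Module R M] : Prop :=
  ∀ (n : ℕ) (x : Fin n → R) (m : Fin n → M), (∑ i, x i • m i) = 0 →
    ∃ (k : ℕ) (b : Fin n → Fin k → R) (m' : Fin k → M),
      (∀ i, m i = ∑ j, b i j • m' j) ∧ ∀ j, (∑ i, x i * b i j) = 0

/-- The ideal of `Bᵐᵒᵖ` generated by the image of an ideal `a` of `B`; when `a` is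
two-sided this is precisely the opposite of `a`, and `Bᵐᵒᵖ ⧸ opIdeal a` is `B/a`
viewed as a right `B`-module. -/
def opIdeal {B : Type u} [Ring B] (a : Ideal B) : Ideal Bᵐᵒᵖ :=
  Submodule.span Bᵐᵒᵖ (MulOpposite.op '' (a : Set B))

/-!
Exactness of `r` on the corestriction `M ↠ range f` of a linear map `f : M → N` gives
`f (r M) = range f ∩ r N`. For `c ↦ c * w` evaluated at `1` this writes every `w ∈ a` as
`v * w` with `v ∈ a`, so `a² = a`. For `(yᵢ) ↦ ∑ yᵢ xᵢ` it says that every relation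
`∑ yᵢ xᵢ ∈ a` lifts to a true relation `∑ (yᵢ - vᵢ) xᵢ = 0` with all `vᵢ ∈ a`, which is the
equational criterion for flatness of `B/a`.
-/

namespace ClosedSubcategory

variable {B : Type u} [Ring B] (C : ClosedSubcategory B)
  {M N : Type u} [AddCommGroup M] [Module B M] [AddCommGroup N] [Module B N]

theorem mem_of_injective (f : M →ₗ[B] N) (hf : Function.Injective f) (hN : C.Mem N) :
    C.Mem M :=
  C.mem_congr (LinearEquiv.ofInjective f hf).symm (C.mem_submodule _ hN)

theorem mem_of_surjective (f : M →ₗ[B] N) (hf : Function.Surjective f) (hM : C.Mem M) :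
    C.Mem N :=
  C.mem_congr (f.quotKerEquivOfSurjective hf) (C.mem_quotient _ hM)

end ClosedSubcategory

section Preradical

variable {B : Type u} [Ring B] {C : ClosedSubcategory B}
  {r : ∀ (M : Type u) [AddCommGroup M] [Module B M], Submodule B M}
  (hmem : ∀ (M : Type u) [AddCommGroup M] [Module B M], C.Mem (r M))
  (hmax : ∀ (M : Type u) [AddCommGroup M] [Module B M] (N : Submodule B M),
    C.Mem N → N ≤ r M)
  {M N : Type u} [AddCommGroup M] [Module B M] [AddCommGroup N] [Module B N]

include hmem hmax

theorem map_preradical_le (f : M →ₗ[B] N) : (r M).map f ≤ r N :=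
  hmax N _ (C.mem_of_surjective _ (f.submoduleMap_surjective (r M)) (hmem M))

theorem comap_preradical_le_of_injective (f : M →ₗ[B] N) (hf : Function.Injective f) :
    (r N).comap f ≤ r M :=
  hmax M _ <| C.mem_of_injective (f.restrict (p := (r N).comap f) fun _ hx => hx)
    (fun _ _ h => Subtype.ext (hf (congrArg Subtype.val h))) (hmem N)

theorem preradical_isTwoSided : Ideal.IsTwoSided (r B) :=
  ⟨fun b hw => by
    simpa using map_preradical_le hmem hmax (LinearMap.toSpanSingleton B B b) ⟨_, hw, rfl⟩⟩

variable (hexact : ∀ {M N : Type u} [AddCommGroup M] [Module B M] [AddCommGroup N] [Module B N]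
  (f : M →ₗ[B] N), Function.Surjective f → (r M).map f = r N)

include hexact

theorem exists_mem_preradical_apply_eq (f : M →ₗ[B] N) {y : M} (hy : f y ∈ r N) :
    ∃ v ∈ r M, f v = f y := by
  have hy' : f.rangeRestrict y ∈ r (LinearMap.range f) :=
    comap_preradical_le_of_injective hmem hmax _ (LinearMap.range f).injective_subtype hy
  rw [← hexact _ f.surjective_rangeRestrict] at hy'
  obtain ⟨v, hv, hvy⟩ := hy'
  exact ⟨v, hv, congrArg Subtype.val hvy⟩

theorem span_mul_preradical_eq :
    Submodule.span B {z : B | ∃ u ∈ r B, ∃ v ∈ r B, z = u * v} = r B := by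
  refine le_antisymm ?_ fun w hw => ?_
  · rw [Submodule.span_le]
    rintro _ ⟨u, -, v, hv, rfl⟩
    exact (r B).smul_mem u hv
  · obtain ⟨v, hv, hvw⟩ := exists_mem_preradical_apply_eq hmem hmax hexact
      (LinearMap.toSpanSingleton B B w) (y := 1) (by simpa using hw)
    simp only [LinearMap.toSpanSingleton_apply, smul_eq_mul, one_mul] at hvw
    exact Submodule.subset_span ⟨v, hv, w, hw, hvw.symm⟩

theorem exists_preradical_syzygy {n : ℕ} (x y : Fin n → B) (hy : ∑ i, y i * x i ∈ r B) :
    ∃ v : Fin n → B, (∀ i, v i ∈ r B) ∧ ∑ i, (y i - v i) * x i = 0 := by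
  obtain ⟨v, hv, hvy⟩ := exists_mem_preradical_apply_eq hmem hmax hexact
    (Fintype.linearCombination B x) (y := y) (by simpa [Fintype.linearCombination_apply] using hy)
  refine ⟨v, fun i => map_preradical_le hmem hmax (LinearMap.proj i) ⟨v, hv, rfl⟩, ?_⟩
  simp only [Fintype.linearCombination_apply, smul_eq_mul] at hvy
  simp [sub_mul, Finset.sum_sub_distrib, hvy]

end Preradical

theorem equationallyFlat_quotient_of_lift_relations {R : Type*} [Ring R] (I : Ideal R)
    (h : ∀ (n : ℕ) (x z : Fin n → R), ∑ i, x i * z i ∈ I →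
      ∃ k : Fin n → R, (∀ i, z i - k i ∈ I) ∧ ∑ i, x i * k i = 0) :
    EquationallyFlat R (R ⧸ I) := by
  intro n x m hm
  choose z hz using fun i => Submodule.Quotient.mk_surjective I (m i)
  have hxz : ∑ i, x i * z i ∈ I := by
    rw [← Submodule.Quotient.mk_eq_zero, ← hm, ← Submodule.mkQ_apply, map_sum]
    simp [← hz, ← Submodule.Quotient.mk_smul]
  obtain ⟨k, hzk, hk⟩ := h n x z hxz
  refine ⟨1, fun i _ => k i, fun _ => Submodule.Quotient.mk 1, fun i => ?_, fun _ => hk⟩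
  rw [← hz i, Fin.sum_univ_one, ← Submodule.Quotient.mk_smul, smul_eq_mul, mul_one,
    Submodule.Quotient.eq]
  exact hzk i

theorem mem_opIdeal {B : Type u} [Ring B] (a : Ideal B) [a.IsTwoSided] {u : Bᵐᵒᵖ} :
    u ∈ opIdeal a ↔ u.unop ∈ a := by
  refine ⟨fun hu => ?_, fun hu => Submodule.subset_span ⟨u.unop, hu, rfl⟩⟩
  induction hu using Submodule.span_induction with
  | mem z hz => obtain ⟨w, hw, rfl⟩ := hz; exact hw
  | zero => exact a.zero_mem
  | add z w _ _ hz hw => exact a.add_mem hz hw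
  | smul c z _ hz => exact a.mul_mem_right c.unop hz

theorem stmt1 {B : Type u} [Ring B] (C : ClosedSubcategory B)
    (r : ∀ (M : Type u) [AddCommGroup M] [Module B M], Submodule B M)
    (hmem : ∀ (M : Type u) [AddCommGroup M] [Module B M], C.Mem (r M))
    (hmax : ∀ (M : Type u) [AddCommGroup M] [Module B M] (N : Submodule B M),
      C.Mem N → N ≤ r M)
    (hexact : ∀ {M N : Type u} [AddCommGroup M] [Module B M] [AddCommGroup N] [Module B N]
      (f : M →ₗ[B] N), Function.Surjective f → (r M).map f = r N) :
    -- `a = r B` is idempotent: `a² = a` ...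
    Submodule.span B {z : B | ∃ u ∈ r B, ∃ v ∈ r B, z = u * v} = r B ∧
      -- ... and `B/a` is flat on the other side.
      EquationallyFlat Bᵐᵒᵖ (Bᵐᵒᵖ ⧸ opIdeal (r B)) := by
  have := preradical_isTwoSided hmem hmax
  refine ⟨span_mul_preradical_eq hmem hmax hexact,
    equationallyFlat_quotient_of_lift_relations _ fun n x z hxz => ?_⟩
  obtain ⟨v, hv, hvx⟩ := exists_preradical_syzygy hmem hmax hexact
    (fun i => (x i).unop) (fun i => (z i).unop) (by simpa [mem_opIdeal] using hxz)
  refine ⟨fun i => z i - MulOpposite.op (v i), fun i => by simpa [mem_opIdeal] using hv i, ?_⟩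
  apply MulOpposite.unop_injective
  simpa using hvx
end

section
/- Let a be an idempotent two-sided ideal of a ring B such that B/a is flat as a left B-module. Then the multiplication map a ⊗_B a → a is an isomorphism of B-bimodules. -/
/-!
Statement 3.  Let `a` be an idempotent two-sided ideal of a ring `B` such that `B/a`
is flat as a left `B`-module.  Then the multiplication map `a ⊗_B a → a` is an
isomorphism of `B`-bimodules.

Since Mathlib's tensor product is only available over commutative rings, the balanced
tensor product `a ⊗_B a` is realized as the quotient of `a ⊗_ℤ a` by the subgroup of
balancing relations `xb ⊗ y - x ⊗ by`; the statement that multiplication induces an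
isomorphism `a ⊗_B a ≅ a` is expressed by saying that the multiplication map
`μ : a ⊗_ℤ a → B` has image exactly `a` and kernel exactly the span of the balancing
relations.  (Bimodule-linearity of the induced map is automatic, since `μ` is
`B`-bilinear by construction.)  Flatness over the noncommutative ring `B` is expressed
by the standard equational criterion.
-/

universe u

open TensorProduct

/-!
Flatness of `B ⧸ a`, applied to the relation `x • [1] = 0` for `x ∈ a`, yields a right unit
`e ∈ a` with `x * e = x`, and by Tominaga's trick finitely many elements of `a` have a common
one. Given `t = ∑ xᵢ ⊗ yᵢ` and a common right unit `e` of the `yᵢ`, balancing gives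
`xᵢ ⊗ yᵢ = xᵢ ⊗ yᵢ e ≡ xᵢ yᵢ ⊗ e`, so `t ≡ (∑ xᵢ yᵢ) ⊗ e = μ t ⊗ e`: hence `μ t ∈ a`,
and `t` is balanced-equivalent to `0` as soon as `μ t = 0`.
-/

section

variable {B : Type u} [Ring B]

theorem EquationallyFlat.exists_mem_mul_eq_self {I : Ideal B}
    (hflat : EquationallyFlat B (B ⧸ I)) {x : B} (hx : x ∈ I) :
    ∃ e ∈ I, x * e = x := by
  obtain ⟨k, b, m, hm, hxb⟩ := hflat 1 ![x] ![I.mkQ 1] <| by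
    simpa [← Submodule.Quotient.mk_smul] using hx
  choose c hc using fun j => I.mkQ_surjective (m j)
  have hxb' : ∀ j, x * b 0 j = 0 := by simpa using hxb
  have hmk : I.mkQ (∑ j, b 0 j * c j) = I.mkQ 1 := by
    simp only [map_sum, ← smul_eq_mul, map_smul, hc]
    simpa using (hm 0).symm
  refine ⟨1 - ∑ j, b 0 j * c j, ?_, ?_⟩
  · rw [← Submodule.Quotient.mk_eq_zero, ← Submodule.mkQ_apply, map_sub, hmk, sub_self]
  · simp [mul_sub, Finset.mul_sum, ← mul_assoc, hxb']

theorem Submodule.exists_mem_forall_mul_eq_self {I : Submodule B B}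
    (hunit : ∀ x ∈ I, ∃ e ∈ I, x * e = x) (s : Finset B) (hs : ∀ x ∈ s, x ∈ I) :
    ∃ e ∈ I, ∀ x ∈ s, x * e = x := by
  classical
  induction s using Finset.induction_on with
  | empty => exact ⟨0, I.zero_mem, by simp⟩
  | insert x s _ ih =>
    obtain ⟨e, he, hse⟩ := ih fun y hy => hs y (Finset.mem_insert_of_mem hy)
    have hx := hs x (Finset.mem_insert_self x s)
    obtain ⟨g, hg, hxg⟩ := hunit (x - x * e) (I.sub_mem hx (I.smul_mem x he))
    refine ⟨e + g - e * g, I.sub_mem (I.add_mem he hg) (I.smul_mem e hg), ?_⟩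
    rintro y hy
    rcases Finset.mem_insert.mp hy with rfl | hy
    · calc y * (e + g - e * g) = y * e + (y - y * e) * g := by noncomm_ring
        _ = y := by rw [hxg]; abel
    · calc y * (e + g - e * g) = y * e + y * g - y * e * g := by noncomm_ring
        _ = y := by rw [hse y hy]; abel

def Ideal.balancingRelations (a : Ideal B) : Submodule ℤ (a ⊗[ℤ] a) :=
  Submodule.span ℤ
    {z : ↥a ⊗[ℤ] ↥a | ∃ (x y p q : a) (b : B),
      (p : B) = (x : B) * b ∧ (q : B) = b * (y : B) ∧ z = p ⊗ₜ y - x ⊗ₜ q}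

namespace Ideal.balancingRelations

variable {a : Ideal B}

theorem tmul_sub_mul_tmul_mem {x y u : a} (hyu : (y : B) * u = y) :
    x ⊗ₜ[ℤ] y - (⟨x * y, a.mul_mem_left _ y.2⟩ : a) ⊗ₜ[ℤ] u ∈ a.balancingRelations := by
  rw [← neg_sub]
  exact neg_mem <| Submodule.subset_span ⟨x, u, _, y, y, rfl, hyu.symm, rfl⟩

theorem le_ker {μ : (a ⊗[ℤ] a) →ₗ[ℤ] B} (hμ : ∀ x y : a, μ (x ⊗ₜ y) = x * y) :
    a.balancingRelations ≤ LinearMap.ker μ := by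
  rw [balancingRelations, Submodule.span_le]
  rintro _ ⟨x, y, p, q, b, hp, hq, rfl⟩
  simp [hμ, hp, hq, mul_assoc]

theorem exists_sub_tmul_mem (hunit : ∀ x ∈ a, ∃ e ∈ a, x * e = x)
    {μ : (a ⊗[ℤ] a) →ₗ[ℤ] B} (hμ : ∀ x y : a, μ (x ⊗ₜ y) = x * y) (t : a ⊗[ℤ] a) :
    ∃ z e : a, (z : B) = μ t ∧ t - z ⊗ₜ e ∈ a.balancingRelations := by
  classical
  obtain ⟨S, rfl⟩ := TensorProduct.exists_finset t
  obtain ⟨e, he, hSe⟩ := Submodule.exists_mem_forall_mul_eq_self hunit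
    (S.image fun p => (p.2 : B)) (by simp +contextual)
  refine ⟨∑ p ∈ S, ⟨p.1 * p.2, a.mul_mem_left _ p.2.2⟩, ⟨e, he⟩, by simp [hμ], ?_⟩
  rw [sum_tmul, ← Finset.sum_sub_distrib]
  exact Submodule.sum_mem _ fun p hp =>
    tmul_sub_mul_tmul_mem (hSe _ (Finset.mem_image_of_mem _ hp))

end Ideal.balancingRelations

end

theorem stmt3_general {B : Type u} [Ring B] (a : Ideal B)
    -- `B/a` is flat as a left `B`-module:
    (hflat : EquationallyFlat B (B ⧸ a))
    -- the multiplication map `μ : a ⊗_ℤ a → B`, `x ⊗ y ↦ xy`: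
    (μ : (↥a ⊗[ℤ] ↥a) →ₗ[ℤ] B)
    (hμ : ∀ (x y : a), μ (x ⊗ₜ y) = (x : B) * (y : B)) :
    -- the image of `μ` is exactly `a` ...
    (Set.range μ = (a : Set B)) ∧
      -- ... and its kernel is exactly the subgroup of balancing relations, so that the
      -- induced map `a ⊗_B a → a` is an isomorphism (of `B`-bimodules).
      LinearMap.ker μ =
        Submodule.span ℤ
          {z : ↥a ⊗[ℤ] ↥a | ∃ (x y p q : a) (b : B),
            (p : B) = (x : B) * b ∧ (q : B) = b * (y : B) ∧ z = p ⊗ₜ y - x ⊗ₜ q} := by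
  have hunit : ∀ x ∈ a, ∃ e ∈ a, x * e = x := fun x hx => hflat.exists_mem_mul_eq_self hx
  have hred := Ideal.balancingRelations.exists_sub_tmul_mem hunit hμ
  refine ⟨Set.ext fun z => ⟨?_, fun hz => ?_⟩, le_antisymm (fun t ht => ?_) ?_⟩
  · rintro ⟨t, rfl⟩
    obtain ⟨z, -, hz, -⟩ := hred t
    exact hz ▸ z.2
  · obtain ⟨e, he, hze⟩ := hunit z hz
    exact ⟨(⟨z, hz⟩ : a) ⊗ₜ (⟨e, he⟩ : a), (hμ _ _).trans hze⟩
  · obtain ⟨z, e, hz, ht'⟩ := hred t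
    obtain rfl : z = 0 := Subtype.ext (hz.trans ht)
    rw [zero_tmul, sub_zero] at ht'
    exact ht'
  · exact Ideal.balancingRelations.le_ker hμ

theorem stmt3 {B : Type u} [Ring B] (a : Ideal B)
    -- `a` is a two-sided ideal:
    (h2 : ∀ x ∈ a, ∀ b : B, x * b ∈ a)
    -- `a` is idempotent (`a² = a`):
    (hidem : Submodule.span B {z : B | ∃ u ∈ a, ∃ v ∈ a, z = u * v} = a)
    -- `B/a` is flat as a left `B`-module:
    (hflat : EquationallyFlat B (B ⧸ a))
    -- the multiplication map `μ : a ⊗_ℤ a → B`, `x ⊗ y ↦ xy`: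
    (μ : (↥a ⊗[ℤ] ↥a) →ₗ[ℤ] B)
    (hμ : ∀ (x y : a), μ (x ⊗ₜ y) = (x : B) * (y : B)) :
    -- the image of `μ` is exactly `a` ...
    (Set.range μ = (a : Set B)) ∧
      -- ... and its kernel is exactly the subgroup of balancing relations, so that the
      -- induced map `a ⊗_B a → a` is an isomorphism (of `B`-bimodules).
      LinearMap.ker μ =
        Submodule.span ℤ
          {z : ↥a ⊗[ℤ] ↥a | ∃ (x y p q : a) (b : B),
            (p : B) = (x : B) * b ∧ (q : B) = b * (y : B) ∧ z = p ⊗ₜ y - x ⊗ₜ q} :=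
  stmt3_general a hflat μ hμ
end

section
/- Let r be an exact preradical on Mod-B associated to a closed subcategory C, with a = r(B). Then the functor F = Hom_B(a, -) restricted to C is right adjoint to r : Mod-B → C; that is, for every right B-module M and every M' in C there is a natural isomorphism Hom_C(r(M), M') ≅ Hom_B(M, Hom_B(a, M')). -/
/-!
Statement 4.  Let `r` be an exact preradical on the category of (right) `B`-modules
associated to a closed subcategory `C`, with `a = r B`.  Then `Hom_B(a, -)` restricted
to `C` is right adjoint to `r : Mod-B → C`: for every `B`-module `M` and every `M'` in
`C` there is a natural isomorphism `Hom_C(r M, M') ≅ Hom_B(M, Hom_B(a, M'))`.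

Formalized for left modules (the mirror image).  `Hom_B(a, M')` carries the module
structure `(b • f) x = f (x b)` (mirror of `(f·b)(x) = f(bx)`), which requires the
(automatic) two-sidedness of `a`; similarly the (automatic) fact `a•M ≤ r M` is taken
as a hypothesis in order to write down the canonical adjunction bijection, whose
naturality is then automatic since it is given by an explicit formula.
-/

universe u

open DirectSum

variable {B : Type u} [Ring B]

/-- `Hom_B(a, M)` as a `B`-module, with action `(b • f) x = f (x * b)`. -/
def THom (a : Ideal B) (_h2 : ∀ x ∈ a, ∀ b : B, x * b ∈ a) (M : Type u) [AddCommGroup M]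
    [Module B M] : Type u :=
  ↥a →ₗ[B] M

namespace THom

variable {a : Ideal B} {h2 : ∀ x ∈ a, ∀ b : B, x * b ∈ a} {M : Type u} [AddCommGroup M]
  [Module B M]

instance : AddCommGroup (THom a h2 M) :=
  inferInstanceAs (AddCommGroup (↥a →ₗ[B] M))

/-- The underlying linear map. -/
def toLin (f : THom a h2 M) : ↥a →ₗ[B] M := f

theorem ext' {f g : THom a h2 M} (h : ∀ x : ↥a, f.toLin x = g.toLin x) : f = g :=
  LinearMap.ext h

def smulAux (b : B) (f : THom a h2 M) : THom a h2 M where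
  toFun := fun x => f.toLin ⟨(x : B) * b, h2 x x.2 b⟩
  map_add' := by
    intro x y
    show f.toLin ⟨((x + y : ↥a) : B) * b, h2 _ (x + y).2 b⟩
        = f.toLin ⟨(x : B) * b, h2 x x.2 b⟩ + f.toLin ⟨(y : B) * b, h2 y y.2 b⟩
    have h : (⟨((x + y : ↥a) : B) * b, h2 _ (x + y).2 b⟩ : ↥a)
        = ⟨(x : B) * b, h2 x x.2 b⟩ + ⟨(y : B) * b, h2 y y.2 b⟩ :=
      Subtype.ext (by simp [add_mul])
    rw [h, map_add]
  map_smul' := by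
    intro c x
    show f.toLin ⟨((c • x : ↥a) : B) * b, h2 _ (c • x).2 b⟩
        = (RingHom.id B) c • f.toLin ⟨(x : B) * b, h2 x x.2 b⟩
    have h : (⟨((c • x : ↥a) : B) * b, h2 _ (c • x).2 b⟩ : ↥a)
        = c • ⟨(x : B) * b, h2 x x.2 b⟩ :=
      Subtype.ext (by simp [mul_assoc, smul_eq_mul])
    rw [h, map_smul]
    rfl

instance : Module B (THom a h2 M) where
  smul := smulAux
  one_smul f := ext' fun x => by
    show f.toLin ⟨(x : B) * 1, _⟩ = f.toLin x
    congr 1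
    exact Subtype.ext (by simp)
  mul_smul b c f := ext' fun x => by
    show f.toLin ⟨(x : B) * (b * c), _⟩ = f.toLin ⟨((x : B) * b) * c, _⟩
    congr 1
    exact Subtype.ext (by simp [mul_assoc])
  smul_zero b := ext' fun x => rfl
  smul_add b f g := ext' fun x => rfl
  add_smul b c f := ext' fun x => by
    show f.toLin ⟨(x : B) * (b + c), _⟩ = f.toLin ⟨(x : B) * b, _⟩ + f.toLin ⟨(x : B) * c, _⟩
    have h : (⟨(x : B) * (b + c), h2 x x.2 (b + c)⟩ : ↥a)
        = ⟨(x : B) * b, h2 x x.2 b⟩ + ⟨(x : B) * c, h2 x x.2 c⟩ :=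
      Subtype.ext (by simp [mul_add])
    rw [h, map_add]
  zero_smul f := ext' fun x => by
    show f.toLin ⟨(x : B) * 0, _⟩ = 0
    have h : (⟨(x : B) * 0, h2 x x.2 0⟩ : ↥a) = 0 := Subtype.ext (by simp)
    rw [h, map_zero]

@[simp] theorem smul_apply (b : B) (f : THom a h2 M) (x : ↥a) :
    (b • f).toLin x = f.toLin ⟨(x : B) * b, h2 x x.2 b⟩ := rfl

end THom

/-!
Exactness forces `r M = a • M`: a free module `M →₀ B` maps onto `M`, and its coordinate
projections show that `r (M →₀ B)` consists of tuples with entries in `a`. As `a • M` is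
generated by the `x • m`, the map `g ↦ (m ↦ (x ↦ g (x • m)))` is injective on
`Hom(r M, M')`.
A module `M'` in `C` has no nonzero `m'` with `a • m' = 0`, since then
`B m' = r (B m') ≤ a • B m' = 0`; so `m' ↦ (x ↦ x • m')` embeds `M'` into `Hom(a, M')`.
Any `f : M → Hom(a, M')` sends `x • m` to `x • f m`, the image of `f m x` under this
embedding, so `f` restricted to `a • M` factors through it, which gives the preimage of `f`.
-/

open Function Submodule

namespace THom

variable {a : Ideal B} {h2 : ∀ x ∈ a, ∀ b : B, x * b ∈ a}
  {M M' : Type u} [AddCommGroup M] [Module B M] [AddCommGroup M'] [Module B M']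

variable (h2 M') in
def unit : M' →ₗ[B] THom a h2 M' where
  toFun m' := (LinearMap.toSpanSingleton B M' m' ∘ₗ a.subtype : ↥a →ₗ[B] M')
  map_add' m₁ m₂ := ext' fun x => smul_add (x : B) m₁ m₂
  map_smul' b m' := ext' fun x =>
    show (x : B) • b • m' = ((x : B) * b) • m' from smul_smul _ _ _

@[simp] theorem unit_apply (m' : M') (x : ↥a) : (unit h2 M' m').toLin x = (x : B) • m' := rfl

theorem smul_eq_unit (f : THom a h2 M') {x : B} (hx : x ∈ a) :
    x • f = unit h2 M' (f.toLin ⟨x, hx⟩) :=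
  ext' fun y => by
    rw [smul_apply, unit_apply, ← map_smul]
    rfl

theorem unit_injective (h : ∀ m' : M', (∀ x ∈ a, x • m' = 0) → m' = 0) :
    Injective (unit h2 M') :=
  (injective_iff_map_eq_zero _).mpr fun m' hm' => h m' fun x hx =>
    congrArg (fun f : THom a h2 M' => f.toLin ⟨x, hx⟩) hm'

variable (h2) in
def adjunct (N : Submodule B M) (hN : a • ⊤ ≤ N) (g : ↥N →ₗ[B] M') :
    M →ₗ[B] THom a h2 M' where
  toFun m := (g ∘ₗ (LinearMap.toSpanSingleton B M m ∘ₗ a.subtype).codRestrict N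
    fun x => hN (smul_mem_smul x.2 mem_top) : ↥a →ₗ[B] M')
  map_add' m₁ m₂ := ext' fun x => by
    show g ⟨(x : B) • (m₁ + m₂), _⟩
      = g ⟨(x : B) • m₁, _⟩ + g ⟨(x : B) • m₂, _⟩
    rw [← map_add]
    exact congrArg g (Subtype.ext (smul_add (x : B) m₁ m₂))
  map_smul' b m := ext' fun x => congrArg g (Subtype.ext (smul_smul (x : B) b m))

theorem apply_smul_eq_unit (f : M →ₗ[B] THom a h2 M') {x : B} (hx : x ∈ a) (m : M) :
    f (x • m) = unit h2 M' ((f m).toLin ⟨x, hx⟩) := by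
  rw [map_smul, smul_eq_unit _ hx]

variable (h2) in
theorem adjunct_injective {N : Submodule B M} (hN : a • ⊤ ≤ N) (hN' : N ≤ a • ⊤) :
    Injective (adjunct h2 N hN : (↥N →ₗ[B] M') → M →ₗ[B] THom a h2 M') := by
  intro g g' hgg
  have hle : a • ⊤ ≤ (LinearMap.eqLocus g g').map N.subtype := smul_le.mpr fun x hx m _ =>
    ⟨⟨x • m, hN (smul_mem_smul hx mem_top)⟩,
      congrArg (fun F : M →ₗ[B] THom a h2 M' => (F m).toLin ⟨x, hx⟩) hgg, rfl⟩
  ext ⟨n, hn⟩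
  obtain ⟨n', hn', rfl⟩ := hle (hN' hn)
  exact hn'

theorem adjunct_surjective {N : Submodule B M} (hN : a • ⊤ ≤ N) (hN' : N ≤ a • ⊤)
    (hu : Injective (unit h2 M')) :
    Surjective (adjunct h2 N hN : (↥N →ₗ[B] M') → M →ₗ[B] THom a h2 M') := by
  intro f
  have hrange : a • ⊤ ≤ (LinearMap.range (unit h2 M')).comap f :=
    smul_le.mpr fun x hx m _ => ⟨_, (apply_smul_eq_unit f hx m).symm⟩
  let e := LinearEquiv.ofInjective _ hu
  refine ⟨e.symm ∘ₗ (f ∘ₗ N.subtype).codRestrict (LinearMap.range (unit h2 M'))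
    fun n => hrange (hN' n.2), ?_⟩
  refine LinearMap.ext fun m => ext' fun x => ?_
  show e.symm ⟨f ((x : B) • m), _⟩ = (f m).toLin x
  rw [LinearEquiv.symm_apply_eq]
  exact Subtype.ext (apply_smul_eq_unit f x.2 m)

end THom

theorem le_smul_top_of_exact (r : ∀ (M : Type u) [AddCommGroup M] [Module B M], Submodule B M)
    (hexact : ∀ {M N : Type u} [AddCommGroup M] [Module B M] [AddCommGroup N] [Module B N]
      (f : M →ₗ[B] N), Surjective f → (r M).map f = r N)
    (M : Type u) [AddCommGroup M] [Module B M] :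
    r M ≤ r B • ⊤ := by
  have hcoord : ∀ v ∈ r (M →₀ B), ∀ i, v i ∈ r B := fun v hv i => by
    rw [← hexact (Finsupp.lapply i) fun b => ⟨Finsupp.single i b, by simp⟩]
    exact ⟨v, hv, rfl⟩
  rw [← hexact _ (Finsupp.linearCombination_id_surjective B M)]
  rintro _ ⟨v, hv, rfl⟩
  rw [Finsupp.linearCombination_apply]
  exact sum_mem fun i _ => smul_mem_smul (hcoord v hv i) mem_top

theorem eq_zero_of_forall_smul_eq_zero (C : ClosedSubcategory B)
    (r : ∀ (M : Type u) [AddCommGroup M] [Module B M], Submodule B M)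
    (hmax : ∀ (M : Type u) [AddCommGroup M] [Module B M] (N : Submodule B M),
      C.Mem N → N ≤ r M)
    (hexact : ∀ {M N : Type u} [AddCommGroup M] [Module B M] [AddCommGroup N] [Module B N]
      (f : M →ₗ[B] N), Surjective f → (r M).map f = r N)
    (h2 : ∀ x ∈ r B, ∀ b : B, x * b ∈ r B)
    {M : Type u} [AddCommGroup M] [Module B M] (hM : C.Mem M) {m : M}
    (hm : ∀ x ∈ r B, x • m = 0) : m = 0 := by
  let N := span B {m}
  have htop : (⊤ : Submodule B N) ≤ r N :=
    hmax N ⊤ (C.mem_congr topEquiv.symm (C.mem_submodule N hM))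
  have hbot : r B • (⊤ : Submodule B N) ≤ ⊥ := smul_le.mpr fun x hx n _ => by
    obtain ⟨b, hb⟩ := mem_span_singleton.mp n.2
    refine (mem_bot B).mpr (Subtype.ext ?_)
    show x • (n : M) = 0
    rw [← hb, smul_smul]
    exact hm _ (h2 x hx b)
  have hmN : (⟨m, mem_span_singleton_self m⟩ : N) ∈ r B • ⊤ :=
    le_smul_top_of_exact r hexact N (htop mem_top)
  simpa using hbot hmN

theorem stmt4_general (C : ClosedSubcategory B)
    (r : ∀ (M : Type u) [AddCommGroup M] [Module B M], Submodule B M)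
    (hmax : ∀ (M : Type u) [AddCommGroup M] [Module B M] (N : Submodule B M),
      C.Mem N → N ≤ r M)
    (hexact : ∀ {M N : Type u} [AddCommGroup M] [Module B M] [AddCommGroup N] [Module B N]
      (f : M →ₗ[B] N), Function.Surjective f → (r M).map f = r N)
    -- (automatic) two-sidedness of `a = r B`:
    (h2 : ∀ x ∈ r B, ∀ b : B, x * b ∈ r B)
    -- (automatic) `a • M ≤ r M`:
    (hsm : ∀ (M : Type u) [AddCommGroup M] [Module B M], ∀ {x : B}, x ∈ r B →
      ∀ m : M, x • m ∈ r M) :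
    -- the canonical natural bijection `Hom_C(r M, M') ≅ Hom_B(M, Hom_B(a, M'))`:
    ∀ (M : Type u) [AddCommGroup M] [Module B M] (M' : Type u) [AddCommGroup M']
      [Module B M'], C.Mem M' →
      ∃ e : (↥(r M) →ₗ[B] M') ≃ (M →ₗ[B] THom (r B) h2 M'),
        ∀ (g : ↥(r M) →ₗ[B] M') (m : M) (x : ↥(r B)),
          ((e g) m).toLin x = g ⟨(x : B) • m, hsm M x.2 m⟩ := by
  intro M _ _ M' _ _ hM'
  have hge : r B • ⊤ ≤ r M := smul_le.mpr fun x hx m _ => hsm M hx m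
  have hle : r M ≤ r B • ⊤ := le_smul_top_of_exact r hexact M
  have hunit : Injective (THom.unit h2 M') :=
    THom.unit_injective fun _ => eq_zero_of_forall_smul_eq_zero C r hmax hexact h2 hM'
  exact ⟨Equiv.ofBijective _ ⟨THom.adjunct_injective h2 hge hle,
    THom.adjunct_surjective hge hle hunit⟩, fun _ _ _ => rfl⟩

theorem stmt4 (C : ClosedSubcategory B)
    (r : ∀ (M : Type u) [AddCommGroup M] [Module B M], Submodule B M)
    (hmem : ∀ (M : Type u) [AddCommGroup M] [Module B M], C.Mem (r M))
    (hmax : ∀ (M : Type u) [AddCommGroup M] [Module B M] (N : Submodule B M),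
      C.Mem N → N ≤ r M)
    (hexact : ∀ {M N : Type u} [AddCommGroup M] [Module B M] [AddCommGroup N] [Module B N]
      (f : M →ₗ[B] N), Function.Surjective f → (r M).map f = r N)
    -- (automatic) two-sidedness of `a = r B`:
    (h2 : ∀ x ∈ r B, ∀ b : B, x * b ∈ r B)
    -- (automatic) `a • M ≤ r M`:
    (hsm : ∀ (M : Type u) [AddCommGroup M] [Module B M], ∀ {x : B}, x ∈ r B →
      ∀ m : M, x • m ∈ r M) :
    -- the canonical natural bijection `Hom_C(r M, M') ≅ Hom_B(M, Hom_B(a, M'))`: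
    ∀ (M : Type u) [AddCommGroup M] [Module B M] (M' : Type u) [AddCommGroup M']
      [Module B M'], C.Mem M' →
      ∃ e : (↥(r M) →ₗ[B] M') ≃ (M →ₗ[B] THom (r B) h2 M'),
        ∀ (g : ↥(r M) →ₗ[B] M') (m : M) (x : ↥(r B)),
          ((e g) m).toLin x = g ⟨(x : B) • m, hsm M x.2 m⟩ :=
  stmt4_general C r hmax hexact h2 hsm
end

section
/- Let r be an exact preradical on Mod-B associated to a closed subcategory C and a = r(B). If E is an injective object of the category C, then Hom_B(a, E) is an injective right B-module. -/
/-!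
Statement 5.  Let `r` be an exact preradical on the category of (right) `B`-modules
associated to a closed subcategory `C` and `a = r B`.  If `E` is an injective object
of the category `C`, then `Hom_B(a, E)` is an injective `B`-module.
(Formalized for left modules, the mirror image; `Hom_B(a, E)` carries the module
structure `(b • f) x = f (x b)`, which uses the automatic two-sidedness of `a`.)
-/

universe u

open DirectSum

variable {B : Type u} [Ring B]

/-- `E` is an injective object of the closed subcategory `C`: every `B`-linear map
to `E` from an object of `C` extends along monomorphisms of `C`. -/
def InjectiveIn (C : ClosedSubcategory B) (E : Type u) [AddCommGroup E] [Module B E] : Prop :=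
  ∀ (M N : Type u) [AddCommGroup M] [Module B M] [AddCommGroup N] [Module B N],
    C.Mem M → C.Mem N → ∀ (f : M →ₗ[B] N), Function.Injective f →
      ∀ g : M →ₗ[B] E, ∃ h : N →ₗ[B] E, ∀ m, h (f m) = g m


/-!
By Baer's criterion it suffices to extend `g : I → Hom_B(a, E)` along `I ⊆ B`. The products
`x * i` (`x ∈ a`, `i ∈ I`) span a submodule of `a`, on which `x * i ↦ g i x` is well defined;
as a submodule of `a` it lies in `C`, so injectivity of `E` in `C` extends it to some
`h : a → E`, and then `g i = i • h`.

Well-definedness is where exactness enters: it forces `r M = a • M` for every module `M`, and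
as `r K = K ⊓ r M` for `K ≤ M` (closedness under submodules), `K ⊓ a • M = a • K`.
Applied to the kernel `K` of a free presentation, a relation `∑ xₚ • mₚ = 0` with `xₚ ∈ a`
lifts to an element of `a • K`, on which `∑ g (mₚ) (xₚ)` visibly vanishes.
-/

def PreservesSurjections (r : ∀ (M : Type u) [AddCommGroup M] [Module B M], Submodule B M) :
    Prop :=
  ∀ {M N : Type u} [AddCommGroup M] [Module B M] [AddCommGroup N] [Module B N]
    (f : M →ₗ[B] N), Function.Surjective f → (r M).map f = r N

namespace ClosedSubcategory

variable (C : ClosedSubcategory B)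

theorem mem_of_le {X : Type u} [AddCommGroup X] [Module B X] {S T : Submodule B X}
    (hST : S ≤ T) (hT : C.Mem T) : C.Mem S :=
  C.mem_congr (Submodule.comapSubtypeEquivOfLe hST) (C.mem_submodule _ hT)

structure IsAssociatedPreradical
    (r : ∀ (M : Type u) [AddCommGroup M] [Module B M], Submodule B M) : Prop where
  mem : ∀ (M : Type u) [AddCommGroup M] [Module B M], C.Mem (r M)
  le : ∀ (M : Type u) [AddCommGroup M] [Module B M] (N : Submodule B M), C.Mem N → N ≤ r M

namespace IsAssociatedPreradical

variable {C} {r : ∀ (M : Type u) [AddCommGroup M] [Module B M], Submodule B M}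
  {M N : Type u} [AddCommGroup M] [Module B M] [AddCommGroup N] [Module B N]

theorem map_le (hr : C.IsAssociatedPreradical r) (f : N →ₗ[B] M) : (r N).map f ≤ r M := by
  refine hr.le M _ ?_
  have hrange : LinearMap.range (f ∘ₗ (r N).subtype) = (r N).map f := by
    rw [LinearMap.range_comp, Submodule.range_subtype]
  rw [← hrange]
  exact C.mem_congr (f ∘ₗ (r N).subtype).quotKerEquivRange (C.mem_quotient _ (hr.mem N))

theorem comap_le_of_injective (hr : C.IsAssociatedPreradical r) (f : N →ₗ[B] M)
    (hf : Function.Injective f) : (r M).comap f ≤ r N :=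
  hr.le N _ <| C.mem_congr (Submodule.equivMapOfInjective f hf _).symm
    (C.mem_of_le (Submodule.map_comap_le f _) (hr.mem M))

theorem smul_top_le (hr : C.IsAssociatedPreradical r) : r B • (⊤ : Submodule B M) ≤ r M :=
  Submodule.smul_le.2 fun c hc m _ =>
    hr.map_le (LinearMap.toSpanSingleton B M m) ⟨c, hc, rfl⟩

theorem finsupp_le_smul_top (hr : C.IsAssociatedPreradical r) (ι : Type u) :
    r (ι →₀ B) ≤ r B • (⊤ : Submodule B (ι →₀ B)) := by
  intro s hs
  have hcoord : ∀ p, s p ∈ r B := fun p => hr.map_le (Finsupp.lapply p) ⟨s, hs, rfl⟩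
  rw [← Finsupp.sum_single s]
  exact Submodule.sum_mem _ fun p _ => by
    rw [← Finsupp.smul_single_one]
    exact Submodule.smul_mem_smul (hcoord p) trivial

theorem le_smul_top (hr : C.IsAssociatedPreradical r) (hexact : PreservesSurjections r) :
    r M ≤ r B • (⊤ : Submodule B M) := by
  rw [← hexact _ (Finsupp.linearCombination_id_surjective B M)]
  calc (r (M →₀ B)).map (Finsupp.linearCombination B id)
      ≤ (r B • (⊤ : Submodule B (M →₀ B))).map (Finsupp.linearCombination B id) :=
        Submodule.map_mono (hr.finsupp_le_smul_top M)
    _ ≤ r B • ⊤ := by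
        rw [Submodule.map_smul'']
        exact Submodule.smul_mono le_rfl le_top

theorem inf_smul_top_le_smul (hr : C.IsAssociatedPreradical r) (hexact : PreservesSurjections r)
    (K : Submodule B M) :
    K ⊓ r B • ⊤ ≤ r B • K := by
  rintro v ⟨hvK, hv⟩
  have hvr : (⟨v, hvK⟩ : K) ∈ r B • (⊤ : Submodule B K) :=
    hr.le_smul_top hexact <|
      hr.comap_le_of_injective K.subtype K.injective_subtype (hr.smul_top_le hv)
  have := Submodule.mem_map_of_mem (f := K.subtype) hvr
  rwa [Submodule.map_smul'', Submodule.map_subtype_top] at this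

end IsAssociatedPreradical

end ClosedSubcategory

namespace THom

variable {a : Ideal B} {h2 : ∀ x ∈ a, ∀ b : B, x * b ∈ a} {M E : Type u} [AddCommGroup M]
  [Module B M] [AddCommGroup E] [Module B E] {ι : Type*}

noncomputable def sumEval (g : M →ₗ[B] THom a h2 E) (m : ι → M) :
    (ι →₀ a) →ₗ[B] E :=
  Finsupp.lsum ℕ fun p => (g (m p)).toLin

@[simp] theorem sumEval_single (g : M →ₗ[B] THom a h2 E) (m : ι → M) (p : ι) (x : a) :
    sumEval g m (Finsupp.single p x) = (g (m p)).toLin x := by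
  simp [sumEval]

theorem sumEval_mapRange_mul (g : M →ₗ[B] THom a h2 E) (m : ι → M) {c : B} (hc : c ∈ a)
    (k : ι →₀ B) :
    sumEval g m (k.mapRange (fun b => ⟨c * b, h2 c hc b⟩) (Subtype.ext (mul_zero c)))
      = (g (Finsupp.linearCombination B m k)).toLin ⟨c, hc⟩ := by
  induction k using Finsupp.induction_linear with
  | zero =>
    rw [Finsupp.mapRange_zero, map_zero, map_zero, map_zero]
    rfl
  | add k₁ k₂ h₁ h₂ =>
    rw [Finsupp.mapRange_add (fun x y => Subtype.ext (mul_add c x y)), map_add, h₁, h₂, map_add,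
      map_add]
    rfl
  | single p b =>
    rw [Finsupp.mapRange_single, sumEval_single, Finsupp.linearCombination_single, map_smul,
      smul_apply]

end THom

theorem Ideal.range_mapRange_subtype_le_smul_top (a : Ideal B) (ι : Type*) :
    LinearMap.range (Finsupp.mapRange.linearMap (α := ι) a.subtype)
      ≤ a • (⊤ : Submodule B (ι →₀ B)) := by
  rintro _ ⟨u, rfl⟩
  induction u using Finsupp.induction_linear with
  | zero => simp
  | add u₁ u₂ h₁ h₂ => rw [map_add]; exact add_mem h₁ h₂
  | single p x =>
    rw [Finsupp.mapRange.linearMap_apply, Finsupp.mapRange_single, Submodule.subtype_apply,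
      ← Finsupp.smul_single_one]
    exact Submodule.smul_mem_smul x.2 trivial

namespace ClosedSubcategory.IsAssociatedPreradical

variable {C : ClosedSubcategory B}
  {r : ∀ (M : Type u) [AddCommGroup M] [Module B M], Submodule B M}
  {M E : Type u} [AddCommGroup M] [Module B M] [AddCommGroup E] [Module B E]

theorem ker_le_ker_sumEval (hr : C.IsAssociatedPreradical r) (hexact : PreservesSurjections r)
    {h2 : ∀ x ∈ r B, ∀ b : B, x * b ∈ r B} (g : M →ₗ[B] THom (r B) h2 E) {ι : Type u}
    (m : ι → M) :
    LinearMap.ker (Finsupp.linearCombination B m ∘ₗ Finsupp.mapRange.linearMap (r B).subtype)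
      ≤ LinearMap.ker (THom.sumEval g m) := by
  intro u hu
  set incl := Finsupp.mapRange.linearMap (α := ι) (r B).subtype
  have hsmul : r B • LinearMap.ker (Finsupp.linearCombination B m)
      ≤ (LinearMap.ker (THom.sumEval g m)).map incl := by
    refine Submodule.smul_le.2 fun c hc k hk =>
      ⟨k.mapRange (fun b => ⟨c * b, h2 c hc b⟩) (Subtype.ext (mul_zero c)), ?_, ?_⟩
    · rw [SetLike.mem_coe, LinearMap.mem_ker, THom.sumEval_mapRange_mul g m hc,
        LinearMap.mem_ker.1 hk, map_zero]
      rfl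
    · ext p
      simp [incl]
  obtain ⟨u', hu', hincl⟩ := hsmul <| hr.inf_smul_top_le_smul hexact _
    ⟨hu, Ideal.range_mapRange_subtype_le_smul_top (r B) ι ⟨u, rfl⟩⟩
  rwa [Finsupp.mapRange_injective _ rfl Subtype.val_injective hincl] at hu'

theorem exists_apply_mul_eq (hr : C.IsAssociatedPreradical r) (hexact : PreservesSurjections r)
    {h2 : ∀ x ∈ r B, ∀ b : B, x * b ∈ r B} (hinj : InjectiveIn C E) (I : Ideal B)
    (g : I →ₗ[B] THom (r B) h2 E) :
    ∃ h : r B →ₗ[B] E, ∀ (x : r B) (i : I), h ⟨x * i, h2 x x.2 i⟩ = (g i).toLin x := by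
  set ν := I.subtype ∘ₗ Finsupp.linearCombination B id ∘ₗ
    Finsupp.mapRange.linearMap (α := I) (r B).subtype
  have hν : ∀ u, ν u ∈ r B := by
    intro u
    induction u using Finsupp.induction_linear with
    | zero => simp
    | add u₁ u₂ h₁ h₂ => rw [map_add]; exact add_mem h₁ h₂
    | single i x => simpa [ν] using h2 x x.2 i
  set μ := LinearMap.codRestrict (r B) ν hν
  have hker : LinearMap.ker μ ≤ LinearMap.ker (THom.sumEval g id) := by
    rw [LinearMap.ker_codRestrict, LinearMap.ker_comp_of_ker_eq_bot _ I.ker_subtype]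
    exact hr.ker_le_ker_sumEval hexact g id
  let φ := (LinearMap.ker μ).liftQ (THom.sumEval g id) hker ∘ₗ
    μ.quotKerEquivRange.symm.toLinearMap
  obtain ⟨h, hh⟩ := hinj _ _ (C.mem_submodule _ (hr.mem B)) (hr.mem B) _
    (LinearMap.range μ).injective_subtype φ
  refine ⟨h, fun x i => ?_⟩
  have hμ : μ (Finsupp.single i x) = ⟨x * i, h2 x x.2 i⟩ := by
    ext
    simp [μ, ν]
  calc h ⟨x * i, h2 x x.2 i⟩
      = h ((LinearMap.range μ).subtype ⟨μ (Finsupp.single i x), μ.mem_range_self _⟩) :=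
        congrArg h hμ.symm
    _ = THom.sumEval g id (Finsupp.single i x) := by
      rw [hh]
      simp only [φ, LinearMap.comp_apply, LinearEquiv.coe_coe,
        LinearMap.quotKerEquivRange_symm_apply_image, Submodule.mkQ_apply, Submodule.liftQ_apply]
    _ = (g i).toLin x := THom.sumEval_single g id i x

end ClosedSubcategory.IsAssociatedPreradical

theorem stmt5_general (C : ClosedSubcategory B)
    (r : ∀ (M : Type u) [AddCommGroup M] [Module B M], Submodule B M)
    (hmem : ∀ (M : Type u) [AddCommGroup M] [Module B M], C.Mem (r M))
    (hmax : ∀ (M : Type u) [AddCommGroup M] [Module B M] (N : Submodule B M),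
      C.Mem N → N ≤ r M)
    (hexact : ∀ {M N : Type u} [AddCommGroup M] [Module B M] [AddCommGroup N] [Module B N]
      (f : M →ₗ[B] N), Function.Surjective f → (r M).map f = r N)
    -- (automatic) two-sidedness of `a = r B`:
    (h2 : ∀ x ∈ r B, ∀ b : B, x * b ∈ r B)
    (E : Type u) [AddCommGroup E] [Module B E]
    (hinj : InjectiveIn C E) :
    Module.Injective B (THom (r B) h2 E) := by
  have hr : C.IsAssociatedPreradical r := ⟨hmem, hmax⟩
  refine Module.Baer.injective fun I g => ?_
  obtain ⟨h, hh⟩ := hr.exists_apply_mul_eq hexact hinj I g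
  exact ⟨LinearMap.toSpanSingleton B _ h, fun i hi => THom.ext' fun x => hh x ⟨i, hi⟩⟩

theorem stmt5 (C : ClosedSubcategory B)
    (r : ∀ (M : Type u) [AddCommGroup M] [Module B M], Submodule B M)
    (hmem : ∀ (M : Type u) [AddCommGroup M] [Module B M], C.Mem (r M))
    (hmax : ∀ (M : Type u) [AddCommGroup M] [Module B M] (N : Submodule B M),
      C.Mem N → N ≤ r M)
    (hexact : ∀ {M N : Type u} [AddCommGroup M] [Module B M] [AddCommGroup N] [Module B N]
      (f : M →ₗ[B] N), Function.Surjective f → (r M).map f = r N)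
    -- (automatic) two-sidedness of `a = r B`:
    (h2 : ∀ x ∈ r B, ∀ b : B, x * b ∈ r B)
    (E : Type u) [AddCommGroup E] [Module B E] (hE : C.Mem E)
    (hinj : InjectiveIn C E) :
    Module.Injective B (THom (r B) h2 E) :=
  stmt5_general C r hmem hmax hexact h2 E hinj
end

section
/- Let r be an exact preradical on Mod-B associated to a closed subcategory C, a = r(B), and M a module in C with injective hull E_C(M) computed in the category C. Then the map ζ_M : M → Hom_B(a, E_C(M)) given by ζ_M(m)(x) = m·x is an injective essential right B-module homomorphism whose codomain is an injective right B-module; hence ζ_M is an injective envelope of M in Mod-B. -/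
/-!
Statement 7.  Let `r` be an exact preradical on the category of (right) `B`-modules
associated to a closed subcategory `C`, `a = r B`, and `M` a module in `C` with
injective hull `E_C(M)` computed in `C`.  Then the map `ζ_M : M → Hom_B(a, E_C(M))`
given by `ζ_M(m)(x) = m·x` is an injective essential `B`-module homomorphism whose
codomain is an injective `B`-module; hence `ζ_M` is an injective envelope of `M` in
the category of all `B`-modules.  (Formalized for left modules: `ζ m x = x • m`, and
the injective hull is given as data: an embedding `ι : M → E` with essential range,
`E` in `C` and injective as an object of `C`.)
-/

universe u

open DirectSum

variable {B : Type u} [Ring B]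

/-
Exactness of `r` yields local units: applied to `B ↠ B m` for `m` in an object of `C`, where
`r (B m) = B m`, it gives `x ∈ a` with `x • m = m`, and applied to a finite direct sum it gives a common local
unit for finitely many elements. Local units in `M` make `ζ` injective, and the essentiality of
`ι` transfers to `ζ` since `c • f u = ι m` forces `(c u) • f = ζ m`.

For Baer's criterion, `g : I → Hom_B(a, E)` induces `∑ cₖ uₖ xₖ ↦ ∑ cₖ g(xₖ)(uₖ)` on `a I ⊆ a`.
This is well defined because, at a common local unit `w` of the `cₖ uₖ`, the right-hand side
equals `g(∑ cₖ uₖ xₖ)(w)`. As `a I` lies in `C`, the map extends to `a` by injectivity of `E`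
in `C`, and the extension is the element of `Hom_B(a, E)` that `g` asks for.
-/

def LinearMap.IsEssential {M N : Type*} [AddCommGroup M] [Module B M] [AddCommGroup N]
    [Module B N] (f : M →ₗ[B] N) : Prop :=
  ∀ K : Submodule B N, K ⊓ LinearMap.range f = ⊥ → K = ⊥

theorem LinearMap.isEssential_iff {M N : Type*} [AddCommGroup M] [Module B M] [AddCommGroup N]
    [Module B N] (f : M →ₗ[B] N) :
    f.IsEssential ↔ ∀ y : N, y ≠ 0 → ∃ c : B, c • y ≠ 0 ∧ c • y ∈ LinearMap.range f := by
  constructor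
  · intro hf y hy
    by_contra! h
    refine hy ((Submodule.mem_bot B).mp ?_)
    rw [← hf (B ∙ y) ?_]
    · exact Submodule.mem_span_singleton_self y
    rw [eq_bot_iff]
    rintro _ ⟨hz, hzf⟩
    obtain ⟨c, rfl⟩ := Submodule.mem_span_singleton.mp hz
    by_cases hc : c • y = 0
    · exact hc ▸ Submodule.zero_mem ⊥
    · exact absurd hzf (h c hc)
  · intro h K hK
    rw [eq_bot_iff]
    intro y hy
    by_contra hy0
    obtain ⟨c, hc, hcf⟩ := h y hy0
    exact hc ((Submodule.mem_bot B).mp (hK ▸ ⟨K.smul_mem c hy, hcf⟩))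

theorem InjectiveIn.exists_comp_eq_of_ker_le {C : ClosedSubcategory B} {E : Type u}
    [AddCommGroup E] [Module B E] (hE : InjectiveIn C E) {N P : Type u} [AddCommGroup N]
    [Module B N] [AddCommGroup P] [Module B P] (hN : C.Mem N) (Θ : P →ₗ[B] N) (Φ : P →ₗ[B] E)
    (h : LinearMap.ker Θ ≤ LinearMap.ker Φ) : ∃ f : N →ₗ[B] E, f ∘ₗ Θ = Φ := by
  have hQ : C.Mem (P ⧸ LinearMap.ker Θ) :=
    C.mem_congr Θ.quotKerEquivRange.symm (C.mem_submodule _ hN)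
  obtain ⟨f, hf⟩ := hE _ N hQ hN ((LinearMap.ker Θ).liftQ Θ le_rfl)
    (LinearMap.ker_eq_bot.mp (Submodule.ker_liftQ_eq_bot _ _ _ le_rfl))
    ((LinearMap.ker Θ).liftQ Φ h)
  exact ⟨f, LinearMap.ext fun p => hf (Submodule.Quotient.mk p)⟩

section Preradical

variable (C : ClosedSubcategory B)
  (r : ∀ (M : Type u) [AddCommGroup M] [Module B M], Submodule B M)

theorem preradical_eq_top_of_mem
    (hmax : ∀ (M : Type u) [AddCommGroup M] [Module B M] (N : Submodule B M), C.Mem N → N ≤ r M)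
    {N : Type u} [AddCommGroup N] [Module B N] (hN : C.Mem N) : r N = ⊤ :=
  top_le_iff.mp (hmax N ⊤ (C.mem_congr Submodule.topEquiv.symm hN))

theorem exists_mem_smul_eq_self
    (hmax : ∀ (M : Type u) [AddCommGroup M] [Module B M] (N : Submodule B M), C.Mem N → N ≤ r M)
    (hexact : ∀ {M N : Type u} [AddCommGroup M] [Module B M] [AddCommGroup N] [Module B N]
      (f : M →ₗ[B] N), Function.Surjective f → (r M).map f = r N)
    {N : Type u} [AddCommGroup N] [Module B N] (hN : C.Mem N) (m : N) :
    ∃ x ∈ r B, x • m = m := by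
  let f := LinearMap.toSpanSingleton B N m
  have hm : (⟨m, 1, one_smul B m⟩ : LinearMap.range f) ∈ (r B).map f.rangeRestrict := by
    rw [hexact _ f.surjective_rangeRestrict,
      preradical_eq_top_of_mem C r hmax (C.mem_submodule _ hN)]
    trivial
  obtain ⟨x, hx, hfx⟩ := hm
  exact ⟨x, hx, congrArg Subtype.val hfx⟩

theorem exists_mem_forall_smul_eq_self
    (hmax : ∀ (M : Type u) [AddCommGroup M] [Module B M] (N : Submodule B M), C.Mem N → N ≤ r M)
    (hexact : ∀ {M N : Type u} [AddCommGroup M] [Module B M] [AddCommGroup N] [Module B N]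
      (f : M →ₗ[B] N), Function.Surjective f → (r M).map f = r N)
    {N : Type u} [AddCommGroup N] [Module B N] (hN : C.Mem N) {ι : Type u} [Fintype ι]
    (v : ι → N) : ∃ x ∈ r B, ∀ i, x • v i = v i := by
  classical
  let d : ⨁ _ : ι, N := DFinsupp.equivFunOnFintype.symm v
  obtain ⟨x, hx, hxd⟩ := exists_mem_smul_eq_self C r hmax hexact
    (C.mem_directSum (fun _ : ι => N) fun _ => hN) d
  refine ⟨x, hx, fun i => ?_⟩
  have := DFunLike.congr_fun hxd i
  rwa [DirectSum.smul_apply] at this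

theorem exists_mem_forall_mul_eq_self
    (hmem : ∀ (M : Type u) [AddCommGroup M] [Module B M], C.Mem (r M))
    (hmax : ∀ (M : Type u) [AddCommGroup M] [Module B M] (N : Submodule B M), C.Mem N → N ≤ r M)
    (hexact : ∀ {M N : Type u} [AddCommGroup M] [Module B M] [AddCommGroup N] [Module B N]
      (f : M →ₗ[B] N), Function.Surjective f → (r M).map f = r N)
    (s : Finset B) (hs : ↑s ⊆ (r B : Set B)) : ∃ w ∈ r B, ∀ u ∈ s, w * u = u := by
  obtain ⟨w, hw, hwu⟩ := exists_mem_forall_smul_eq_self C r hmax hexact (hmem B)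
    fun u : s => (⟨u, hs u.2⟩ : r B)
  exact ⟨w, hw, fun u hu => congrArg Subtype.val (hwu ⟨u, hu⟩)⟩

end Preradical

namespace THom

variable {a : Ideal B} {h2 : ∀ x ∈ a, ∀ b : B, x * b ∈ a} {M E : Type u} [AddCommGroup M]
  [Module B M] [AddCommGroup E] [Module B E]

def smulRight (ι : M →ₗ[B] E) : M →ₗ[B] THom a h2 E where
  toFun m := ι.comp ((LinearMap.toSpanSingleton B M m).comp a.subtype)
  map_add' m n := ext' fun x => by
    show ι ((x : B) • (m + n)) = ι ((x : B) • m) + ι ((x : B) • n)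
    rw [smul_add, map_add]
  map_smul' b m := ext' fun x => by
    show ι ((x : B) • b • m) = ι (((x : B) * b) • m)
    rw [mul_smul]

@[simp] theorem toLin_smulRight (ι : M →ₗ[B] E) (m : M) (x : a) :
    (smulRight (h2 := h2) ι m).toLin x = ι ((x : B) • m) := rfl

theorem smulRight_injective {ι : M →ₗ[B] E} (hι : Function.Injective ι)
    (hunit : ∀ m : M, ∃ x ∈ a, x • m = m) : Function.Injective (smulRight (h2 := h2) ι) := by
  refine (injective_iff_map_eq_zero _).mpr fun m hm => ?_
  obtain ⟨x, hx, hxm⟩ := hunit m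
  have : ι (x • m) = ι 0 := by
    rw [← toLin_smulRight (h2 := h2) ι m ⟨x, hx⟩, hm, map_zero]
    rfl
  rw [← hxm, hι this]

theorem smul_eq_smulRight_of_smul_toLin_eq {ι : M →ₗ[B] E} (f : THom a h2 E) (u : a) {c : B}
    {m : M} (hm : c • f.toLin u = ι m) : (c * u) • f = smulRight ι m := by
  refine ext' fun x => ?_
  have hx : (⟨x * (c * u), h2 x x.2 _⟩ : a) = ((x : B) * c) • u :=
    Subtype.ext (by simp [mul_assoc])
  rw [smul_apply, hx, map_smul, mul_smul, hm, toLin_smulRight, map_smul]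

theorem smulRight_isEssential {ι : M →ₗ[B] E} (hι : Function.Injective ι)
    (hess : ι.IsEssential) (hunit : ∀ m : M, ∃ x ∈ a, x • m = m) :
    (smulRight (h2 := h2) ι).IsEssential := by
  rw [LinearMap.isEssential_iff] at hess ⊢
  intro f hf
  obtain ⟨u, hu⟩ : ∃ u : a, f.toLin u ≠ 0 := by
    by_contra! h
    exact hf (ext' fun x => h x)
  obtain ⟨c, hc, m, hm⟩ := hess _ hu
  refine ⟨c * u, ?_, m, (smul_eq_smulRight_of_smul_toLin_eq f u hm.symm).symm⟩
  rw [smul_eq_smulRight_of_smul_toLin_eq f u hm.symm, Ne,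
    ← map_zero (smulRight (h2 := h2) ι), (smulRight_injective hι hunit).eq_iff]
  rintro rfl
  exact hc (hm ▸ map_zero ι)

theorem toLin_smul_of_mul_eq (f : THom a h2 E) {b w : B} (hb : b ∈ a) (hw : w ∈ a)
    (h : w * b = b) : (b • f).toLin ⟨w, hw⟩ = f.toLin ⟨b, hb⟩ := by
  rw [smul_apply]
  exact congrArg f.toLin (Subtype.ext h)

theorem toLin_sum {ι : Type*} (s : Finset ι) (f : ι → THom a h2 E) (x : a) :
    (∑ i ∈ s, f i).toLin x = ∑ i ∈ s, (f i).toLin x :=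
  LinearMap.sum_apply s f x

theorem linearCombination_toLin_eq {I : Ideal B} (g : I →ₗ[B] THom a h2 E) (fs : a × I →₀ B)
    {w : B} (hw : w ∈ a) (hunit : ∀ p ∈ fs.support, w * (fs p * p.1) = fs p * p.1) :
    Finsupp.linearCombination B (fun p => (g p.2).toLin p.1) fs
      = (g (Finsupp.linearCombination B (fun p => (p.1 : B) • p.2) fs)).toLin ⟨w, hw⟩ := by
  simp only [Finsupp.linearCombination_apply, Finsupp.sum, map_sum, map_smul, smul_smul,
    toLin_sum]
  refine Finset.sum_congr rfl fun p hp => ?_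
  rw [toLin_smul_of_mul_eq _ (a.mul_mem_left _ p.1.2) hw (hunit p hp)]
  exact (map_smul (g p.2).toLin (fs p) p.1).symm

theorem module_injective {C : ClosedSubcategory B} (ha : C.Mem a)
    (hunit : ∀ s : Finset B, ↑s ⊆ (a : Set B) → ∃ w ∈ a, ∀ u ∈ s, w * u = u)
    (hE : InjectiveIn C E) : Module.Injective B (THom a h2 E) := by
  classical
  refine Module.Baer.injective fun I g => ?_
  -- `Θ` maps formal sums of pairs `(u, x)` onto `a I`; `Φ` must descend along `Θ`.
  let Ψ : (a × I →₀ B) →ₗ[B] I := Finsupp.linearCombination B fun p => (p.1 : B) • p.2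
  let Θ : (a × I →₀ B) →ₗ[B] a :=
    Finsupp.linearCombination B fun p => ⟨p.1 * p.2, h2 _ p.1.2 _⟩
  let Φ : (a × I →₀ B) →ₗ[B] E := Finsupp.linearCombination B fun p => (g p.2).toLin p.1
  have hΘΨ : a.subtype ∘ₗ Θ = I.subtype ∘ₗ Ψ := Finsupp.lhom_ext fun p b => by simp [Θ, Ψ]
  have hker : LinearMap.ker Θ ≤ LinearMap.ker Φ := by
    intro fs hfs
    obtain ⟨w, hw, hwu⟩ := hunit (fs.support.image fun p => fs p * p.1) (by
      simp only [Finset.coe_image, Set.image_subset_iff]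
      exact fun p _ => a.mul_mem_left _ p.1.2)
    have hΨ : Ψ fs = 0 := by
      simpa [LinearMap.mem_ker.mp hfs] using (LinearMap.congr_fun hΘΨ fs).symm
    rw [LinearMap.mem_ker, linearCombination_toLin_eq g fs hw
      fun p hp => hwu _ (Finset.mem_image_of_mem _ hp), hΨ, map_zero]
    rfl
  obtain ⟨f, hf⟩ := hE.exists_comp_eq_of_ker_le ha Θ Φ hker
  refine ⟨LinearMap.toSpanSingleton B _ f, fun x hx => ext' fun u => ?_⟩
  show f ⟨u * x, h2 _ u.2 x⟩ = (g ⟨x, hx⟩).toLin u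
  simpa [Θ, Φ] using LinearMap.congr_fun hf (Finsupp.single (u, ⟨x, hx⟩) 1)

end THom

theorem stmt7_general (C : ClosedSubcategory B)
    (r : ∀ (M : Type u) [AddCommGroup M] [Module B M], Submodule B M)
    (hmem : ∀ (M : Type u) [AddCommGroup M] [Module B M], C.Mem (r M))
    (hmax : ∀ (M : Type u) [AddCommGroup M] [Module B M] (N : Submodule B M),
      C.Mem N → N ≤ r M)
    (hexact : ∀ {M N : Type u} [AddCommGroup M] [Module B M] [AddCommGroup N] [Module B N]
      (f : M →ₗ[B] N), Function.Surjective f → (r M).map f = r N)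
    -- (automatic) two-sidedness of `a = r B`:
    (h2 : ∀ x ∈ r B, ∀ b : B, x * b ∈ r B)
    -- `M` is an object of `C`:
    (M : Type u) [AddCommGroup M] [Module B M] (hM : C.Mem M)
    -- `E = E_C(M)` is an injective hull of `M` in `C`:
    (E : Type u) [AddCommGroup E] [Module B E] (hEinj : InjectiveIn C E)
    (ι : M →ₗ[B] E) (hι : Function.Injective ι)
    (hess : ∀ K : Submodule B E, K ⊓ LinearMap.range ι = ⊥ → K = ⊥) :
    -- the canonical map `ζ : M → Hom_B(a, E)`, `ζ m x = x • m`, is a `B`-linear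
    -- injective essential map into an injective `B`-module:
    ∃ ζ : M →ₗ[B] THom (r B) h2 E,
      (∀ (m : M) (x : ↥(r B)), (ζ m).toLin x = ι ((x : B) • m)) ∧
      Function.Injective ζ ∧
      (∀ K : Submodule B (THom (r B) h2 E), K ⊓ LinearMap.range ζ = ⊥ → K = ⊥) ∧
      Module.Injective B (THom (r B) h2 E) := by
  have hunit : ∀ m : M, ∃ x ∈ r B, x • m = m := exists_mem_smul_eq_self C r hmax hexact hM
  exact ⟨THom.smulRight ι, fun _ _ => rfl, THom.smulRight_injective hι hunit,
    THom.smulRight_isEssential hι hess hunit,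
    THom.module_injective (hmem B) (exists_mem_forall_mul_eq_self C r hmem hmax hexact) hEinj⟩

theorem stmt7 (C : ClosedSubcategory B)
    (r : ∀ (M : Type u) [AddCommGroup M] [Module B M], Submodule B M)
    (hmem : ∀ (M : Type u) [AddCommGroup M] [Module B M], C.Mem (r M))
    (hmax : ∀ (M : Type u) [AddCommGroup M] [Module B M] (N : Submodule B M),
      C.Mem N → N ≤ r M)
    (hexact : ∀ {M N : Type u} [AddCommGroup M] [Module B M] [AddCommGroup N] [Module B N]
      (f : M →ₗ[B] N), Function.Surjective f → (r M).map f = r N)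
    -- (automatic) two-sidedness of `a = r B`:
    (h2 : ∀ x ∈ r B, ∀ b : B, x * b ∈ r B)
    -- `M` is an object of `C`:
    (M : Type u) [AddCommGroup M] [Module B M] (hM : C.Mem M)
    -- `E = E_C(M)` is an injective hull of `M` in `C`:
    (E : Type u) [AddCommGroup E] [Module B E] (hEC : C.Mem E) (hEinj : InjectiveIn C E)
    (ι : M →ₗ[B] E) (hι : Function.Injective ι)
    (hess : ∀ K : Submodule B E, K ⊓ LinearMap.range ι = ⊥ → K = ⊥) :
    -- the canonical map `ζ : M → Hom_B(a, E)`, `ζ m x = x • m`, is a `B`-linear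
    -- injective essential map into an injective `B`-module:
    ∃ ζ : M →ₗ[B] THom (r B) h2 E,
      (∀ (m : M) (x : ↥(r B)), (ζ m).toLin x = ι ((x : B) • m)) ∧
      Function.Injective ζ ∧
      (∀ K : Submodule B (THom (r B) h2 E), K ⊓ LinearMap.range ζ = ⊥ → K = ⊥) ∧
      Module.Injective B (THom (r B) h2 E) :=
  stmt7_general C r hmem hmax hexact h2 M hM E hEinj ι hι hess
end

section
/- Let r be an exact preradical on Mod-B associated to a closed subcategory C, a = r(B), and M a module in C. Then M is injective in Mod-B if and only if M is injective in C and the canonical map ζ_M : M → Hom_B(a, E_C(M)), ζ_M(m)(x) = m·x, is an isomorphism. -/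
/-!
Statement 8.  Let `r` be an exact preradical on the category of (right) `B`-modules
associated to a closed subcategory `C`, `a = r B`, and `M` a module in `C`.  Then `M`
is injective in the category of all `B`-modules if and only if `M` is injective in `C`
and the canonical map `ζ_M : M → Hom_B(a, E_C(M))`, `ζ_M(m)(x) = m·x`, is an
isomorphism.  (Formalized for left modules: `ζ m x = x • m`; the injective hull
`E_C(M)` in `C` is given as data.)
-/

universe u

open DirectSum

variable {B : Type u} [Ring B]

/-!
Every element `n` of a module in `C` lies in `a n`: the surjection `B → B n` carries `a = r B`
onto `r (B n) = B n`. Hence an element of a module in `C` killed by `a` is zero, and `ζ_M` is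
injective. If `M` is injective, the inclusion `M → E_C(M)` splits and is essential, so it is
onto, and a map `a → M` extends to `B`, i.e. it is `ζ_M` of its value at `1`. Conversely, for
Baer's criterion with an ideal `I`, extend `f : I → M` restricted to `a ∩ I` along `a ∩ I ⊆ a`
inside `C` and write the extension as `ζ_M m₀`; then `f i - i m₀` is killed by `a`, hence zero.
-/

structure IsExactPreradical (C : ClosedSubcategory B)
    (r : ∀ (M : Type u) [AddCommGroup M] [Module B M], Submodule B M) : Prop where
  mem : ∀ (M : Type u) [AddCommGroup M] [Module B M], C.Mem (r M)
  le_of_mem : ∀ (M : Type u) [AddCommGroup M] [Module B M] (N : Submodule B M),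
    C.Mem N → N ≤ r M
  map_eq_of_surjective : ∀ {M N : Type u} [AddCommGroup M] [Module B M] [AddCommGroup N]
    [Module B N] (f : M →ₗ[B] N), Function.Surjective f → (r M).map f = r N

section Zeta

variable {a : Ideal B} {h2 : ∀ x ∈ a, ∀ b : B, x * b ∈ a} {M E : Type u} [AddCommGroup M]
  [Module B M] [AddCommGroup E] [Module B E]

variable (h2) in
def zetaMap (ι : M →ₗ[B] E) : M →ₗ[B] THom a h2 E where
  toFun m :=
    { toFun := fun x => ι ((x : B) • m)
      map_add' := fun x y => by simp [add_smul]
      map_smul' := fun c x => by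
        show ι (((c • x : ↥a) : B) • m) = c • ι ((x : B) • m)
        rw [← map_smul, Submodule.coe_smul, smul_eq_mul, mul_smul] }
  map_add' m m' := THom.ext' fun x => by
    show ι ((x : B) • (m + m')) = ι ((x : B) • m) + ι ((x : B) • m')
    rw [smul_add, map_add]
  map_smul' b m := THom.ext' fun x => by
    show ι ((x : B) • b • m) = ι (((x : B) * b) • m)
    rw [mul_smul]

@[simp] theorem zetaMap_apply (ι : M →ₗ[B] E) (m : M) (x : ↥a) :
    (zetaMap h2 ι m).toLin x = ι ((x : B) • m) := rfl

theorem zetaMap_surjective [Module.Injective B M] {ι : M →ₗ[B] E} (hι : Function.Bijective ι) :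
    Function.Surjective (zetaMap h2 ι) := by
  intro F
  let e := LinearEquiv.ofBijective ι hι
  obtain ⟨G, hG⟩ := Module.Injective.out a.subtype Subtype.val_injective
    (e.symm.toLinearMap ∘ₗ F.toLin)
  refine ⟨G 1, THom.ext' fun x => ?_⟩
  rw [zetaMap_apply, ← map_smul, smul_eq_mul, mul_one]
  exact (congrArg ι (hG x)).trans (e.apply_symm_apply _)

theorem exists_eq_smul_of_zetaMap_surjective {ι : M →ₗ[B] E} (hι : Function.Injective ι)
    (hζ : Function.Surjective (zetaMap h2 ι)) (g : ↥a →ₗ[B] M) :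
    ∃ m₀ : M, ∀ x : ↥a, g x = (x : B) • m₀ := by
  obtain ⟨m₀, hm₀⟩ := hζ (ι ∘ₗ g)
  exact ⟨m₀, fun x => hι (congrArg (fun F => THom.toLin F x) hm₀).symm⟩

end Zeta

theorem Module.Injective.injectiveIn (C : ClosedSubcategory B) (M : Type u) [AddCommGroup M]
    [Module B M] [Module.Injective B M] : InjectiveIn C M :=
  fun _ _ _ _ _ _ _ _ f hf g => Module.Injective.out f hf g

theorem Module.Injective.surjective_of_essential {M E : Type u} [AddCommGroup M] [Module B M]
    [AddCommGroup E] [Module B E] [Module.Injective B M] {ι : M →ₗ[B] E}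
    (hι : Function.Injective ι)
    (hess : ∀ K : Submodule B E, K ⊓ LinearMap.range ι = ⊥ → K = ⊥) :
    Function.Surjective ι := by
  obtain ⟨π, hπ⟩ := Module.Injective.out ι hι LinearMap.id
  have hker : LinearMap.ker π = ⊥ := hess _ <| eq_bot_iff.mpr fun e he => by
    obtain ⟨hπe, m, rfl⟩ := Submodule.mem_inf.mp he
    have hm : m = 0 := (hπ m).symm.trans (LinearMap.mem_ker.mp hπe)
    simp [hm]
  exact fun e => ⟨π e, LinearMap.ker_eq_bot.mp hker (hπ (π e))⟩

namespace IsExactPreradical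

variable {C : ClosedSubcategory B} {r : ∀ (M : Type u) [AddCommGroup M] [Module B M], Submodule B M}
  {h2 : ∀ x ∈ r B, ∀ b : B, x * b ∈ r B} {M E : Type u} [AddCommGroup M] [Module B M]
  [AddCommGroup E] [Module B E] {ι : M →ₗ[B] E}
  {N : Type u} [AddCommGroup N] [Module B N]

theorem eq_top_of_mem (hr : IsExactPreradical C r) (hN : C.Mem N) : r N = ⊤ :=
  top_le_iff.mp (hr.le_of_mem N ⊤ (C.mem_congr Submodule.topEquiv.symm hN))

theorem exists_mem_smul_eq_self (hr : IsExactPreradical C r) (hN : C.Mem N) (n : N) :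
    ∃ x ∈ r B, x • n = n := by
  let φ := LinearMap.toSpanSingleton B N n
  have hn : (⟨n, 1, one_smul B n⟩ : LinearMap.range φ) ∈ (r B).map φ.rangeRestrict := by
    rw [hr.map_eq_of_surjective _ φ.surjective_rangeRestrict,
      hr.eq_top_of_mem (C.mem_submodule _ hN)]
    trivial
  obtain ⟨x, hx, hφx⟩ := hn
  exact ⟨x, hx, congrArg Subtype.val hφx⟩

theorem eq_zero_of_forall_smul_eq_zero (hr : IsExactPreradical C r) (hN : C.Mem N) {n : N}
    (h : ∀ x ∈ r B, x • n = 0) : n = 0 := by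
  obtain ⟨x, hx, hxn⟩ := hr.exists_mem_smul_eq_self hN n
  rw [← hxn, h x hx]

theorem zetaMap_injective (hr : IsExactPreradical C r) (hM : C.Mem M)
    (hι : Function.Injective ι) : Function.Injective (zetaMap h2 ι) := by
  refine (injective_iff_map_eq_zero _).mpr fun m hm => ?_
  refine hr.eq_zero_of_forall_smul_eq_zero hM fun x hx => hι ?_
  rw [map_zero]
  exact congrArg (fun F => THom.toLin F ⟨x, hx⟩) hm

theorem injective_of_zetaMap_surjective (hr : IsExactPreradical C r) (hM : C.Mem M)
    (hMC : InjectiveIn C M) (hι : Function.Injective ι)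
    (hζ : Function.Surjective (zetaMap h2 ι)) : Module.Injective B M := by
  refine Module.Baer.injective fun I f => ?_
  let K : Submodule B (r B) := Submodule.comap (r B).subtype I
  let fK : K →ₗ[B] M := f ∘ₗ LinearMap.codRestrict I ((r B).subtype ∘ₗ K.subtype) fun y => y.2
  obtain ⟨g, hg⟩ := hMC K (r B) (C.mem_submodule K (hr.mem B)) (hr.mem B) K.subtype
    K.injective_subtype fK
  obtain ⟨m₀, hm₀⟩ := exists_eq_smul_of_zetaMap_surjective hι hζ g
  refine ⟨LinearMap.toSpanSingleton B M m₀, fun i hi => ?_⟩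
  have hkill : ∀ x ∈ r B, x • (f ⟨i, hi⟩ - i • m₀) = 0 := by
    intro x hx
    have hxi : f (x • ⟨i, hi⟩) = (x * i) • m₀ := by
      have := hg ⟨⟨x * i, h2 x hx i⟩, I.smul_mem x hi⟩
      rw [hm₀] at this
      exact this.symm
    rw [smul_sub, ← map_smul, hxi, mul_smul, sub_self]
  exact (sub_eq_zero.mp (hr.eq_zero_of_forall_smul_eq_zero hM hkill)).symm

end IsExactPreradical

theorem stmt8_general (C : ClosedSubcategory B)
    (r : ∀ (M : Type u) [AddCommGroup M] [Module B M], Submodule B M)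
    (hmem : ∀ (M : Type u) [AddCommGroup M] [Module B M], C.Mem (r M))
    (hmax : ∀ (M : Type u) [AddCommGroup M] [Module B M] (N : Submodule B M),
      C.Mem N → N ≤ r M)
    (hexact : ∀ {M N : Type u} [AddCommGroup M] [Module B M] [AddCommGroup N] [Module B N]
      (f : M →ₗ[B] N), Function.Surjective f → (r M).map f = r N)
    -- (automatic) two-sidedness of `a = r B`:
    (h2 : ∀ x ∈ r B, ∀ b : B, x * b ∈ r B)
    -- `M` is an object of `C`:
    (M : Type u) [AddCommGroup M] [Module B M] (hM : C.Mem M)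
    -- `E = E_C(M)` is an injective hull of `M` in `C`:
    (E : Type u) [AddCommGroup E] [Module B E]
    (ι : M →ₗ[B] E) (hι : Function.Injective ι)
    (hess : ∀ K : Submodule B E, K ⊓ LinearMap.range ι = ⊥ → K = ⊥) :
    -- `M` is an injective `B`-module iff it is injective in `C` and the canonical
    -- map `ζ : M → Hom_B(a, E)`, `ζ m x = x • m`, is an isomorphism:
    Module.Injective B M ↔
      (InjectiveIn C M ∧
        ∃ ζ : M →ₗ[B] THom (r B) h2 E,
          (∀ (m : M) (x : ↥(r B)), (ζ m).toLin x = ι ((x : B) • m)) ∧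
            Function.Bijective ζ) := by
  have hr : IsExactPreradical C r := ⟨hmem, hmax, hexact⟩
  constructor
  · intro hInj
    have hιsurj := Module.Injective.surjective_of_essential hι hess
    exact ⟨Module.Injective.injectiveIn C M, zetaMap h2 ι, zetaMap_apply ι,
      hr.zetaMap_injective hM hι, zetaMap_surjective ⟨hι, hιsurj⟩⟩
  · rintro ⟨hMC, ζ, hζ, -, hζsurj⟩
    obtain rfl : ζ = zetaMap h2 ι := LinearMap.ext fun m => THom.ext' (hζ m)
    exact hr.injective_of_zetaMap_surjective hM hMC hι hζsurj

theorem stmt8 (C : ClosedSubcategory B)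
    (r : ∀ (M : Type u) [AddCommGroup M] [Module B M], Submodule B M)
    (hmem : ∀ (M : Type u) [AddCommGroup M] [Module B M], C.Mem (r M))
    (hmax : ∀ (M : Type u) [AddCommGroup M] [Module B M] (N : Submodule B M),
      C.Mem N → N ≤ r M)
    (hexact : ∀ {M N : Type u} [AddCommGroup M] [Module B M] [AddCommGroup N] [Module B N]
      (f : M →ₗ[B] N), Function.Surjective f → (r M).map f = r N)
    -- (automatic) two-sidedness of `a = r B`:
    (h2 : ∀ x ∈ r B, ∀ b : B, x * b ∈ r B)
    -- `M` is an object of `C`: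
    (M : Type u) [AddCommGroup M] [Module B M] (hM : C.Mem M)
    -- `E = E_C(M)` is an injective hull of `M` in `C`:
    (E : Type u) [AddCommGroup E] [Module B E] (hEC : C.Mem E) (hEinj : InjectiveIn C E)
    (ι : M →ₗ[B] E) (hι : Function.Injective ι)
    (hess : ∀ K : Submodule B E, K ⊓ LinearMap.range ι = ⊥ → K = ⊥) :
    -- `M` is an injective `B`-module iff it is injective in `C` and the canonical
    -- map `ζ : M → Hom_B(a, E)`, `ζ m x = x • m`, is an isomorphism:
    Module.Injective B M ↔
      (InjectiveIn C M ∧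
        ∃ ζ : M →ₗ[B] THom (r B) h2 E,
          (∀ (m : M) (x : ↥(r B)), (ζ m).toLin x = ι ((x : B) • m)) ∧
            Function.Bijective ζ) :=
  stmt8_general C r hmem hmax hexact h2 M hM E ι hι hess
end

section
/- Let a be a two-sided ideal of B possessing a set E of commuting idempotents such that for every x ∈ a there is e ∈ E with xe = ex = x (a set of local units). If M is a right B-module annihilating into a (M·a = M) of finite support, i.e., there is a finite subset F ⊆ E with m·(Σ_{e∈F} e) = m for all m ∈ M, then every right B-linear map f : a → M is of the form f(x) = m·x for some m ∈ M. -/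
/-!
The sum `u = ∑_{e ∈ F} e` lies in `a`, commutes with every local unit and acts as the
identity on `M`. For a local unit `e` of `x` this gives
`f e = u • f e = f (u e) = f (e u) = e • f u`, hence `f x = f (x e) = x • f e = x • f u`:
the map is multiplication by `m = f u`.

Modules are left modules, mirroring the paper's right modules: `m·x` is written `x • m`.
-/

universe u

namespace LinearMap

variable {B M : Type*} [Semiring B] [AddCommMonoid M] [Module B M] {I : Ideal B}

theorem smul_apply_comm (f : I →ₗ[B] M) {x y : I} (hxy : (x : B) * y = y * x) :
    (x : B) • f y = (y : B) • f x := by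
  rw [← map_smul, ← map_smul]
  exact congrArg f (Subtype.ext hxy)

theorem apply_eq_smul_apply_of_mul_eq (f : I →ₗ[B] M) {x e : I} (hxe : (x : B) * e = x) :
    f x = (x : B) • f e := by
  rw [← map_smul]
  exact congrArg f (Subtype.ext hxe.symm)

theorem apply_eq_smul_apply_of_localUnits (f : I →ₗ[B] M) (u : I)
    (hu : ∀ m : M, (u : B) • m = m)
    (hlocal : ∀ x : I, ∃ e : I, (x : B) * e = x ∧ (u : B) * e = e * u) (x : I) :
    f x = (x : B) • f u := by
  obtain ⟨e, hxe, hue⟩ := hlocal x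
  have hfe : f e = (e : B) • f u := by
    rw [← smul_apply_comm f hue, hu]
  rw [apply_eq_smul_apply_of_mul_eq f hxe, hfe, smul_smul, hxe]

end LinearMap

theorem stmt9_general {B : Type u} [Ring B] (a : Ideal B)
    (E : Set B) (hEa : E ⊆ (a : Set B))
    (hcomm : ∀ e ∈ E, ∀ f ∈ E, e * f = f * e)
    (hlocal : ∀ x ∈ a, ∃ e ∈ E, x * e = x ∧ e * x = x)
    (M : Type u) [AddCommGroup M] [Module B M]
    (F : Finset B) (hF : (F : Set B) ⊆ E)
    (hsupp : ∀ m : M, (∑ e ∈ F, e) • m = m) :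
    ∀ f : ↥a →ₗ[B] M, ∃ m : M, ∀ x : ↥a, f x = (x : B) • m := by
  intro f
  let u : a := ⟨∑ e ∈ F, e, a.sum_mem fun e he => hEa (hF he)⟩
  refine ⟨f u, f.apply_eq_smul_apply_of_localUnits u hsupp fun x => ?_⟩
  obtain ⟨e, heE, hxe, -⟩ := hlocal x x.2
  have hue : Commute (∑ g ∈ F, g) e :=
    Commute.sum_left _ _ _ fun g hg => hcomm g (hF hg) e heE
  exact ⟨⟨e, hEa heE⟩, hxe, hue⟩

theorem stmt9 {B : Type u} [Ring B] (a : Ideal B)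
    (h2 : ∀ x ∈ a, ∀ b : B, x * b ∈ a)
    (E : Set B) (hEa : E ⊆ (a : Set B))
    (hcomm : ∀ e ∈ E, ∀ f ∈ E, e * f = f * e)
    (hidem : ∀ e ∈ E, e * e = e)
    (hlocal : ∀ x ∈ a, ∃ e ∈ E, x * e = x ∧ e * x = x)
    (M : Type u) [AddCommGroup M] [Module B M]
    (hMa : idealSMul a M = ⊤)
    (F : Finset B) (hF : (F : Set B) ⊆ E)
    (hsupp : ∀ m : M, (∑ e ∈ F, e) • m = m) :
    ∀ f : ↥a →ₗ[B] M, ∃ m : M, ∀ x : ↥a, f x = (x : B) • m :=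
  stmt9_general a E hEa hcomm hlocal M F hF hsupp
end

section
/- Let (C, Δ, ε) be a coassociative counital K-coalgebra with C locally projective (hence projective-module-like dual pairing) over a commutative ring K, and let C* = Hom_K(C, K) be its convolution dual algebra. The set Rat(M) of rational elements of a left C*-module M — elements m for which there exist finitely many (c_i, m_i) ∈ C × M with x·m = Σ_i m_i·x(c_i) for all x ∈ C* — is a C*-submodule of M. -/
/-!
Write `Δ cᵢ = ∑ₚ c'ₚ ⊗ c''ₚ` for the finitely many `cᵢ` witnessing the rationality of `m`.
Local projectivity expands all the left factors at once as `c'ₚ = ∑ₗ xₗ(c'ₚ) dₗ`, so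
`(x * y)(cᵢ) = ∑ₗ x(dₗ) (xₗ * y)(cᵢ)`, and then
`x·(y·m) = (x * y)·m = ∑ₗ x(dₗ) • ∑ᵢ (xₗ * y)(cᵢ) • mᵢ` exhibits `y·m` as rational.
-/

universe u

open TensorProduct

variable {K : Type u} [CommRing K] {C : Type u} [AddCommGroup C] [Module K C]
  [Coalgebra K C]

/-- The convolution product on the dual `C* = Hom_K(C, K)` of a coalgebra. -/
noncomputable def conv (x y : Module.Dual K C) : Module.Dual K C :=
  (TensorProduct.lid K K).toLinearMap ∘ₗ (TensorProduct.map x y) ∘ₗ Coalgebra.comul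

variable {M : Type u} [AddCommGroup M] [Module K M]

/-- `m` is a rational element of a `C*`-module `(M, act)`. -/
def IsRational (act : Module.Dual K C →ₗ[K] M →ₗ[K] M) (m : M) : Prop :=
  ∃ (n : ℕ) (c : Fin n → C) (m' : Fin n → M),
    ∀ x : Module.Dual K C, act x m = ∑ i, x (c i) • m' i

lemma conv_apply_of_comul_eq_sum (x y : Module.Dual K C) {c : C} {S : Finset (C × C)}
    (h : Coalgebra.comul (R := K) c = ∑ p ∈ S, p.1 ⊗ₜ[K] p.2) :
    conv x y c = ∑ p ∈ S, x p.1 * y p.2 := by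
  simp [conv, h, map_sum, smul_eq_mul]

def LocallyProjective (R N : Type*) [CommSemiring R] [AddCommMonoid N] [Module R N] : Prop :=
  ∀ (n : ℕ) (c : Fin n → N), ∃ (k : ℕ) (d : Fin k → N)
    (x : Fin k → Module.Dual R N), ∀ i, c i = ∑ l, x l (c i) • d l

lemma LocallyProjective.exists_finset {R N : Type*} [CommSemiring R] [AddCommMonoid N]
    [Module R N] (hlp : LocallyProjective R N) (s : Finset N) :
    ∃ (k : ℕ) (d : Fin k → N) (x : Fin k → Module.Dual R N),
      ∀ c ∈ s, c = ∑ l, x l c • d l := by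
  obtain ⟨k, d, x, hx⟩ := hlp s.card (fun j => s.equivFin.symm j)
  exact ⟨k, d, x, fun c hc => by simpa using hx (s.equivFin ⟨c, hc⟩)⟩

lemma LocallyProjective.exists_conv_expansion (hlp : LocallyProjective K C)
    {ι : Type*} [Fintype ι] (c : ι → C) :
    ∃ (k : ℕ) (d : Fin k → C) (x' : Fin k → Module.Dual K C),
      ∀ (x y : Module.Dual K C) (i : ι),
        conv x y (c i) = ∑ l, x (d l) * conv (x' l) y (c i) := by
  classical
  choose T hT using fun i => TensorProduct.exists_finset (Coalgebra.comul (R := K) (c i))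
  obtain ⟨k, d, x', hx'⟩ :=
    hlp.exists_finset (Finset.univ.biUnion fun i => (T i).image Prod.fst)
  refine ⟨k, d, x', fun x y i => ?_⟩
  have hleft : ∀ p ∈ T i, x p.1 = ∑ l, x' l p.1 * x (d l) := by
    intro p hp
    have hmem : p.1 ∈ Finset.univ.biUnion fun i => (T i).image Prod.fst :=
      Finset.mem_biUnion.2 ⟨i, Finset.mem_univ _, Finset.mem_image_of_mem _ hp⟩
    conv_lhs => rw [hx' p.1 hmem]
    simp [map_sum, smul_eq_mul]
  simp_rw [conv_apply_of_comul_eq_sum _ y (hT i), Finset.mul_sum]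
  rw [Finset.sum_comm]
  refine Finset.sum_congr rfl fun p hp => ?_
  rw [hleft p hp, Finset.sum_mul]
  exact Finset.sum_congr rfl fun l _ => by ring

def ratSubmodule (act : Module.Dual K C →ₗ[K] M →ₗ[K] M) : Submodule K M where
  carrier := {m | IsRational act m}
  zero_mem' := ⟨0, ![], ![], fun x => by simp⟩
  add_mem' := by
    rintro a b ⟨n₁, c₁, m₁, h₁⟩ ⟨n₂, c₂, m₂, h₂⟩
    refine ⟨n₁ + n₂, Fin.append c₁ c₂, Fin.append m₁ m₂, fun x => ?_⟩
    simp [Fin.sum_univ_add, h₁ x, h₂ x]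
  smul_mem' := by
    rintro r a ⟨n, c, m', h⟩
    refine ⟨n, c, fun i => r • m' i, fun x => ?_⟩
    simp only [LinearMap.map_smul, h x, Finset.smul_sum]
    exact Finset.sum_congr rfl fun i _ => smul_comm r _ _

lemma IsRational.map_act {act : Module.Dual K C →ₗ[K] M →ₗ[K] M} (hlp : LocallyProjective K C)
    (hact_mul : ∀ x y : Module.Dual K C, act (conv x y) = act x ∘ₗ act y)
    (y : Module.Dual K C) {m : M} (hm : IsRational act m) : IsRational act (act y m) := by
  obtain ⟨n, c, m', h⟩ := hm
  obtain ⟨k, d, x', hexp⟩ := hlp.exists_conv_expansion c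
  refine ⟨k, d, fun l => ∑ i, conv (x' l) y (c i) • m' i, fun x => ?_⟩
  calc act x (act y m) = act (conv x y) m := by rw [hact_mul]; rfl
    _ = ∑ i, ∑ l, (x (d l) * conv (x' l) y (c i)) • m' i := by
      rw [h]
      exact Finset.sum_congr rfl fun i _ => by rw [hexp x y i, Finset.sum_smul]
    _ = ∑ l, x (d l) • ∑ i, conv (x' l) y (c i) • m' i := by
      simp_rw [Finset.smul_sum, mul_smul]
      exact Finset.sum_comm

theorem stmt13_general
    -- `C` is locally projective as a `K`-module:
    (hlp : ∀ (n : ℕ) (c : Fin n → C), ∃ (k : ℕ) (d : Fin k → C)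
      (x : Fin k → Module.Dual K C), ∀ i, c i = ∑ l, x l (c i) • d l)
    -- `M` is a left `C*`-module for the convolution algebra `C*`:
    (act : Module.Dual K C →ₗ[K] M →ₗ[K] M)
    (hact_mul : ∀ x y : Module.Dual K C, act (conv x y) = (act x) ∘ₗ (act y)) :
    -- the set of rational elements is a `C*`-submodule of `M`:
    ∃ S : Submodule K M, ((S : Set M) = {m : M | IsRational act m}) ∧
      ∀ (x : Module.Dual K C) (m : M), m ∈ S → act x m ∈ S :=
  ⟨ratSubmodule act, rfl, fun x _ hm => hm.map_act hlp hact_mul x⟩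

theorem stmt13
    -- `C` is locally projective as a `K`-module:
    (hlp : ∀ (n : ℕ) (c : Fin n → C), ∃ (k : ℕ) (d : Fin k → C)
      (x : Fin k → Module.Dual K C), ∀ i, c i = ∑ l, x l (c i) • d l)
    -- `M` is a left `C*`-module for the convolution algebra `C*`:
    (act : Module.Dual K C →ₗ[K] M →ₗ[K] M)
    (hact_mul : ∀ x y : Module.Dual K C, act (conv x y) = (act x) ∘ₗ (act y))
    (hact_one : act Coalgebra.counit = LinearMap.id) :
    -- the set of rational elements is a `C*`-submodule of `M`:
    ∃ S : Submodule K M, ((S : Set M) = {m : M | IsRational act m}) ∧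
      ∀ (x : Module.Dual K C) (m : M), m ∈ S → act x m ∈ S :=
  stmt13_general hlp act hact_mul
end

section
/- Let a ⊆ B be an idempotent two-sided ideal with B/a flat as a left B-module. Then for every element u ∈ a and every b ∈ B there exists w ∈ a with (ub)w = ub; more generally, every element of a admits a right local unit in a. -/
/-!
Statement 15.  Let `a ⊆ B` be an idempotent two-sided ideal with `B/a` flat as a left
`B`-module.  Then for every `u ∈ a` and every `b ∈ B` there exists `w ∈ a` with
`(u·b)·w = u·b`; more generally, every element of `a` admits a right local unit in
`a`.  Flatness over the possibly noncommutative ring `B` is expressed by the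
equational criterion.
-/

universe u

theorem EquationallyFlat.exists_of_smul_eq_zero {R M : Type*} [Ring R] [AddCommGroup M]
    [Module R M] (hflat : EquationallyFlat R M) {r : R} {m : M} (hrm : r • m = 0) :
    ∃ (k : ℕ) (b : Fin k → R) (m' : Fin k → M),
      m = ∑ j, b j • m' j ∧ ∀ j, r * b j = 0 := by
  obtain ⟨k, b, m', hm, hb⟩ := hflat 1 (fun _ => r) (fun _ => m) (by simpa using hrm)
  exact ⟨k, b 0, m', hm 0, fun j => by simpa using hb j⟩

/-- Flatness applied to `x • [1] = 0` gives `[1] = ∑ bⱼ [cⱼ]` with `x bⱼ = 0`;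
then `w = 1 - ∑ bⱼ cⱼ` lies in `I` and `x w = x`. -/
theorem exists_mem_mul_eq_self_of_equationallyFlat_quotient {B : Type*} [Ring B]
    (I : Submodule B B) (hflat : EquationallyFlat B (B ⧸ I)) {x : B} (hx : x ∈ I) :
    ∃ w ∈ I, x * w = x := by
  have hx_one : x • I.mkQ 1 = 0 := by
    rw [← map_smul, smul_eq_mul, mul_one, Submodule.mkQ_apply, Submodule.Quotient.mk_eq_zero]
    exact hx
  obtain ⟨k, b, m', hone, hxb⟩ := hflat.exists_of_smul_eq_zero hx_one
  choose c hc using fun j => I.mkQ_surjective (m' j)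
  have hone' : I.mkQ 1 = I.mkQ (∑ j, b j * c j) := by
    rw [hone, map_sum]
    exact Finset.sum_congr rfl fun j _ => by rw [← hc, ← map_smul, smul_eq_mul]
  refine ⟨1 - ∑ j, b j * c j, (Submodule.Quotient.eq I).mp hone', ?_⟩
  have hsum : ∑ j, x * (b j * c j) = 0 :=
    Finset.sum_eq_zero fun j _ => by rw [← mul_assoc, hxb j, zero_mul]
  rw [mul_sub, mul_one, Finset.mul_sum, hsum, sub_zero]

theorem stmt15_general {B : Type u} [Ring B] (a : Ideal B)
    -- `a` is two-sided:
    (h2 : ∀ x ∈ a, ∀ b : B, x * b ∈ a)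
    -- `B/a` is flat as a left `B`-module:
    (hflat : EquationallyFlat B (B ⧸ a)) :
    (∀ u ∈ a, ∀ b : B, ∃ w ∈ a, (u * b) * w = u * b) ∧
      ∀ x ∈ a, ∃ w ∈ a, x * w = x := by
  have local_unit : ∀ x ∈ a, ∃ w ∈ a, x * w = x := fun _ hx =>
    exists_mem_mul_eq_self_of_equationallyFlat_quotient a hflat hx
  exact ⟨fun u hu b => local_unit _ (h2 u hu b), local_unit⟩

theorem stmt15 {B : Type u} [Ring B] (a : Ideal B)
    -- `a` is two-sided:
    (h2 : ∀ x ∈ a, ∀ b : B, x * b ∈ a)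
    -- `a` is idempotent:
    (hidem : Submodule.span B {z : B | ∃ u ∈ a, ∃ v ∈ a, z = u * v} = a)
    -- `B/a` is flat as a left `B`-module:
    (hflat : EquationallyFlat B (B ⧸ a)) :
    (∀ u ∈ a, ∀ b : B, ∃ w ∈ a, (u * b) * w = u * b) ∧
      ∀ x ∈ a, ∃ w ∈ a, x * w = x :=
  stmt15_general a h2 hflat
end
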